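/- arXiv:2506.16772 — 7 statements merged into one kernel-verified Lean document; each statement's English description precedes it below -/
import Mathlib

section
/- Let Y ⊆ 𝒢⁽⁰⁾ be a domain of asymptotic expansion. Then for any α ∈ (0, 1/2] and β ∈ [1/2, 1), there exist C > 0 and a unital symmetric decomposable K ⊆ 𝒢 of finite length such that for any measurable A ⊆ Y with α·μ(Y) ≤ μ(A) ≤ β·μ(Y), one has μ((r(K·A) \ A) ∩ Y) > C·μ(A). -/
/-!
Sets with at most half the measure of `Y` are expanded by the set `K₁` that `Y` provides for `α`.
If `A` has more than half, its complement `Y \ A` has measure between `(1 - β) μ(Y)` and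
`μ(Y) / 2`, so the set `K₂` provided for `1 - β` expands it. As `K₂` is symmetric, the boundary
of `Y \ A` is reached by `K₂` from the boundary of `A`. Each admissible bisection of `K₂` is
uniformly absolutely continuous, because it preserves null sets, so the boundary of `A` has
measure at least some `d > 0` independent of `A`. Then `K₁ ∪ K₂` works with
`C = min C₁ (d / 2)`.
-/

open MeasureTheory Set

/-- An algebraic groupoid: a set `G` with a distinguished unit space,
source and range maps, a (total, but only meaningful on composable pairs)
multiplication and an inverse. -/
structure AlgGroupoid (G : Type*) where
  unitSpace : Set G
  s : G → G
  r : G → G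
  mul : G → G → G
  inv : G → G
  s_mem : ∀ γ, s γ ∈ unitSpace
  r_mem : ∀ γ, r γ ∈ unitSpace
  s_unit : ∀ x ∈ unitSpace, s x = x
  r_unit : ∀ x ∈ unitSpace, r x = x
  s_mul : ∀ γ₁ γ₂, s γ₁ = r γ₂ → s (mul γ₁ γ₂) = s γ₂
  r_mul : ∀ γ₁ γ₂, s γ₁ = r γ₂ → r (mul γ₁ γ₂) = r γ₁
  mul_assoc' : ∀ γ₁ γ₂ γ₃, s γ₁ = r γ₂ → s γ₂ = r γ₃ →
    mul (mul γ₁ γ₂) γ₃ = mul γ₁ (mul γ₂ γ₃)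
  unit_mul : ∀ γ, mul (r γ) γ = γ
  mul_unit : ∀ γ, mul γ (s γ) = γ
  s_inv : ∀ γ, s (inv γ) = r γ
  r_inv : ∀ γ, r (inv γ) = s γ
  mul_inv : ∀ γ, mul γ (inv γ) = r γ
  inv_mul : ∀ γ, mul (inv γ) γ = s γ

namespace AlgGroupoid

variable {G : Type*} (𝒢 : AlgGroupoid G)

/-- `A⁻¹ = {γ⁻¹ : γ ∈ A}`. -/
def invSet (A : Set G) : Set G := 𝒢.inv '' A

/-- `A · B = {γ₁γ₂ : γ₁ ∈ A, γ₂ ∈ B, s(γ₁) = r(γ₂)}`. -/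
def mulSet (A B : Set G) : Set G :=
  {γ | ∃ γ₁ ∈ A, ∃ γ₂ ∈ B, 𝒢.s γ₁ = 𝒢.r γ₂ ∧ γ = 𝒢.mul γ₁ γ₂}

/-- `r (K ⋅ A)` for `A` a subset of the unit space. -/
def rMul (K A : Set G) : Set G := 𝒢.r '' {γ | γ ∈ K ∧ 𝒢.s γ ∈ A}

/-- A length function on a groupoid. -/
structure IsLength (ℓ : G → ℝ) : Prop where
  nonneg : ∀ γ, 0 ≤ ℓ γ
  unit_zero : ∀ x ∈ 𝒢.unitSpace, ℓ x = 0
  inv_eq : ∀ γ, ℓ (𝒢.inv γ) = ℓ γ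
  subadd : ∀ γ₁ γ₂, 𝒢.s γ₁ = 𝒢.r γ₂ → ℓ (𝒢.mul γ₁ γ₂) ≤ ℓ γ₁ + ℓ γ₂

/-- A bisection: both source and range maps are injective on it. -/
def IsBisection (K : Set G) : Prop := Set.InjOn 𝒢.s K ∧ Set.InjOn 𝒢.r K

/-- `ℓ(K) ≤ L`. -/
def lengthLE (ℓ : G → ℝ) (K : Set G) (L : ℝ) : Prop := ∀ γ ∈ K, ℓ γ ≤ L

variable [MeasurableSpace G]

/-- An admissible bisection: the source and range sets are measurable, the induced
bijection `τ_K = r|_K ∘ (s|_K)⁻¹` is a measure-class-preserving measurable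
isomorphism (formulated at the level of sets), and `ℓ(K) < ∞`. -/
structure IsAdmissible (ℓ : G → ℝ) (μ : Measure G) (K : Set G) : Prop where
  bisection : 𝒢.IsBisection K
  source_meas : MeasurableSet (𝒢.s '' K)
  range_meas : MeasurableSet (𝒢.r '' K)
  image_meas : ∀ A : Set G, MeasurableSet A → A ⊆ 𝒢.s '' K → MeasurableSet (𝒢.rMul K A)
  preimage_meas : ∀ B : Set G, MeasurableSet B → B ⊆ 𝒢.r '' K →
    MeasurableSet (𝒢.rMul (𝒢.invSet K) B)
  null_iff : ∀ A : Set G, MeasurableSet A → A ⊆ 𝒢.s '' K →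
    (μ (𝒢.rMul K A) = 0 ↔ μ A = 0)
  length_bdd : ∃ L : ℝ, ∀ γ ∈ K, ℓ γ ≤ L

/-- `K` is decomposable: a finite union of admissible bisections. -/
def IsDecomposable (ℓ : G → ℝ) (μ : Measure G) (K : Set G) : Prop :=
  ∃ (N : ℕ) (Ks : Fin N → Set G),
    (∀ i, 𝒢.IsAdmissible ℓ μ (Ks i)) ∧ K = ⋃ i, Ks i

/-- `K` is unital symmetric `N`-decomposable. -/
def IsUSDecomposable (ℓ : G → ℝ) (μ : Measure G) (N : ℕ) (K : Set G) : Prop :=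
  ∃ Ks : Fin N → Set G,
    (∀ i, 𝒢.IsAdmissible ℓ μ (Ks i)) ∧ K = ⋃ i, Ks i ∧
    (∃ i, Ks i = 𝒢.unitSpace) ∧
    (∃ σ : Equiv.Perm (Fin N), ∀ i, 𝒢.invSet (Ks i) = Ks (σ i))

/-- `𝒢` is asymptotically expanding in measure `μ`. -/
def AsympExpanding (ℓ : G → ℝ) (μ : Measure G) : Prop :=
  ∀ α : ℝ, 0 < α → α ≤ 1 / 2 →
    ∃ (C L : ℝ) (N : ℕ) (K : Set G), 0 < C ∧
      𝒢.IsUSDecomposable ℓ μ N K ∧ lengthLE ℓ K L ∧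
      ∀ A : Set G, MeasurableSet A → A ⊆ 𝒢.unitSpace →
        α ≤ (μ A).toReal → (μ A).toReal ≤ 1 / 2 →
        C * (μ A).toReal < (μ (𝒢.rMul K A \ A)).toReal

/-- `Y` is a domain of asymptotic expansion. -/
def DomainAsympExp (ℓ : G → ℝ) (μ : Measure G) (Y : Set G) : Prop :=
  ∀ α : ℝ, 0 < α → α ≤ 1 / 2 →
    ∃ (C L : ℝ) (N : ℕ) (K : Set G), 0 < C ∧
      𝒢.IsUSDecomposable ℓ μ N K ∧ lengthLE ℓ K L ∧
      ∀ A : Set G, MeasurableSet A → A ⊆ Y →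
        α * (μ Y).toReal ≤ (μ A).toReal → (μ A).toReal ≤ (μ Y).toReal / 2 →
        C * (μ A).toReal < (μ ((𝒢.rMul K A \ A) ∩ Y)).toReal

end AlgGroupoid

open Filter
open scoped ENNReal

/-- Otherwise there are sets `Eₙ` with `μ Eₙ < 2⁻ⁿ` and `ε < ν (Φ Eₙ)`; by Borel–Cantelli
their limsup is `μ`-null, yet its image has `ν`-measure at least `ε`. -/
theorem exists_pos_forall_measure_le_of_null {α β : Type*} [MeasurableSpace α]
    [MeasurableSpace β] {μ : Measure α} {ν : Measure β} [IsFiniteMeasure ν]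
    {Φ : Set α → Set β} (hmono : Monotone Φ)
    (hiInter : ∀ F : ℕ → Set α, ⋂ n, Φ (F n) ⊆ Φ (⋂ n, F n))
    (hmeas : ∀ E, MeasurableSet E → MeasurableSet (Φ E))
    (hnull : ∀ E, MeasurableSet E → μ E = 0 → ν (Φ E) = 0) {ε : ℝ≥0∞} (hε : 0 < ε) :
    ∃ δ : ℝ≥0∞, 0 < δ ∧ ∀ E, MeasurableSet E → μ E < δ → ν (Φ E) ≤ ε := by
  by_contra! hcon
  choose E hEm hEμ hEν using fun n : ℕ => hcon (2⁻¹ ^ n) (ENNReal.pow_pos (by simp) n)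
  set F : ℕ → Set α := fun n => ⋃ k ≥ n, E k
  have hF_anti : Antitone F := fun m n hmn =>
    biUnion_subset_biUnion_left fun k hk => le_trans hmn hk
  have hFm : ∀ n, MeasurableSet (F n) := fun n =>
    .biUnion (to_countable _) fun k _ => hEm k
  have hsum : ∑' n, μ (E n) ≠ ∞ := by
    refine ne_top_of_le_ne_top ?_ (ENNReal.tsum_le_tsum fun n => (hEμ n).le)
    rw [ENNReal.tsum_geometric, ENNReal.one_sub_inv_two, inv_inv]
    exact ENNReal.ofNat_ne_top
  have hlimsup : limsup E atTop = ⋂ n, F n := by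
    simp only [limsup_eq_iInf_iSup_of_nat, iSup_eq_iUnion, iInf_eq_iInter, F]
  have hΦ_null : ν (Φ (⋂ n, F n)) = 0 :=
    hnull _ (.iInter hFm) (hlimsup ▸ measure_limsup_atTop_eq_zero hsum)
  have hΦ_large : ε ≤ ν (⋂ n, Φ (F n)) := by
    change ε ≤ ν (⋂ n, (Φ ∘ F) n)
    rw [(hmono.comp_antitone hF_anti).measure_iInter
      (fun n => (hmeas _ (hFm n)).nullMeasurableSet) ⟨0, measure_ne_top ν _⟩]
    exact le_iInf fun n => (hEν n).le.trans
      (measure_mono (hmono (subset_biUnion_of_mem (u := E) (le_refl n))))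
  exact hε.not_ge (hΦ_null ▸ hΦ_large.trans (measure_mono (hiInter F)))

namespace AlgGroupoid

variable {G : Type*} (𝒢 : AlgGroupoid G)

lemma rMul_mono_left {K K' : Set G} (h : K ⊆ K') (A : Set G) : 𝒢.rMul K A ⊆ 𝒢.rMul K' A :=
  image_mono fun _ hγ => ⟨h hγ.1, hγ.2⟩

lemma rMul_mono_right (K : Set G) : Monotone (𝒢.rMul K) :=
  fun _ _ h => image_mono fun _ hγ => ⟨hγ.1, h hγ.2⟩

@[simp]
lemma rMul_empty (K : Set G) : 𝒢.rMul K ∅ = ∅ := by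
  simp [rMul]

lemma rMul_inter_source (K A : Set G) : 𝒢.rMul K (A ∩ 𝒢.s '' K) = 𝒢.rMul K A := by
  unfold rMul
  congr 1
  ext γ
  exact ⟨fun h => ⟨h.1, h.2.1⟩, fun h => ⟨h.1, h.2, mem_image_of_mem _ h.1⟩⟩

lemma rMul_iUnion_left {ι : Sort*} (Ks : ι → Set G) (A : Set G) :
    𝒢.rMul (⋃ i, Ks i) A = ⋃ i, 𝒢.rMul (Ks i) A := by
  simp only [rMul, ← image_iUnion]
  congr 1
  ext γ
  simp only [mem_iUnion, mem_ofPred_eq, exists_and_right]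

lemma iInter_rMul_subset {K : Set G} (hK : InjOn 𝒢.r K) {ι : Sort*} [Nonempty ι]
    (F : ι → Set G) : ⋂ i, 𝒢.rMul K (F i) ⊆ 𝒢.rMul K (⋂ i, F i) := by
  intro x hx
  obtain ⟨γ, ⟨hγK, -⟩, rfl⟩ := mem_iInter.mp hx (Classical.arbitrary ι)
  refine ⟨γ, ⟨hγK, mem_iInter.mpr fun i => ?_⟩, rfl⟩
  obtain ⟨γ', ⟨hγ'K, hγ's⟩, hγ'r⟩ := mem_iInter.mp hx i
  rwa [hK hγK hγ'K hγ'r.symm]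

/-- An arrow `γ ∈ K` from `Y \ A` into `A` starts in the boundary of `A`, as `γ⁻¹ ∈ K` shows. -/
lemma boundary_compl_subset {K A Y : Set G} (hK : ∀ γ ∈ K, 𝒢.inv γ ∈ K) :
    (𝒢.rMul K (Y \ A) \ (Y \ A)) ∩ Y ⊆ 𝒢.rMul K ((𝒢.rMul K A \ A) ∩ Y) := by
  rintro x ⟨⟨⟨γ, ⟨hγK, hγs⟩, rfl⟩, hγr⟩, hrY⟩
  have hrA : 𝒢.r γ ∈ A := by_contra fun h => hγr ⟨hrY, h⟩
  refine ⟨γ, ⟨hγK, ⟨⟨?_, hγs.2⟩, hγs.1⟩⟩, rfl⟩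
  exact ⟨𝒢.inv γ, ⟨hK γ hγK, by rwa [𝒢.s_inv]⟩, 𝒢.r_inv γ⟩

lemma lengthLE.union {ℓ : G → ℝ} {K₁ K₂ : Set G} {L₁ L₂ : ℝ} (h₁ : lengthLE ℓ K₁ L₁)
    (h₂ : lengthLE ℓ K₂ L₂) : lengthLE ℓ (K₁ ∪ K₂) (max L₁ L₂) := by
  rintro γ (hγ | hγ)
  · exact (h₁ γ hγ).trans (le_max_left _ _)
  · exact (h₂ γ hγ).trans (le_max_right _ _)

variable [MeasurableSpace G] {ℓ : G → ℝ} {μ : Measure G}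

namespace IsAdmissible

variable {𝒢} {K : Set G} (hK : 𝒢.IsAdmissible ℓ μ K)
include hK

lemma measurableSet_rMul {A : Set G} (hA : MeasurableSet A) : MeasurableSet (𝒢.rMul K A) :=
  𝒢.rMul_inter_source K A ▸ hK.image_meas _ (hA.inter hK.source_meas) inter_subset_right

lemma measure_rMul_eq_zero {A : Set G} (hA : MeasurableSet A) (hA0 : μ A = 0) :
    μ (𝒢.rMul K A) = 0 := by
  rw [← 𝒢.rMul_inter_source K A]
  exact (hK.null_iff _ (hA.inter hK.source_meas) inter_subset_right).2
    (measure_mono_null inter_subset_left hA0)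

lemma exists_pos_forall_measure_rMul_le [IsFiniteMeasure μ] {ε : ℝ≥0∞} (hε : 0 < ε) :
    ∃ δ : ℝ≥0∞, 0 < δ ∧ ∀ E, MeasurableSet E → μ E < δ → μ (𝒢.rMul K E) ≤ ε :=
  exists_pos_forall_measure_le_of_null (𝒢.rMul_mono_right K)
    (fun F => 𝒢.iInter_rMul_subset hK.bisection.2 F) (fun _ => hK.measurableSet_rMul)
    (fun _ => hK.measure_rMul_eq_zero) hε

end IsAdmissible

namespace IsDecomposable

variable {𝒢} {K : Set G} (hK : 𝒢.IsDecomposable ℓ μ K)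
include hK

lemma measurableSet_rMul {A : Set G} (hA : MeasurableSet A) : MeasurableSet (𝒢.rMul K A) := by
  obtain ⟨N, Ks, hadm, rfl⟩ := hK
  rw [rMul_iUnion_left]
  exact .iUnion fun i => (hadm i).measurableSet_rMul hA

lemma exists_pos_forall_measure_rMul_le [IsFiniteMeasure μ] {ε : ℝ≥0∞} (hε : 0 < ε) :
    ∃ δ : ℝ≥0∞, 0 < δ ∧ ∀ E, MeasurableSet E → μ E < δ → μ (𝒢.rMul K E) ≤ ε := by
  obtain ⟨N, Ks, hadm, rfl⟩ := hK
  choose δ hδ0 hδ using fun i => (hadm i).exists_pos_forall_measure_rMul_le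
    (ENNReal.div_pos hε.ne' (ENNReal.natCast_ne_top N))
  refine ⟨Finset.univ.inf δ, (Finset.lt_inf_iff ENNReal.zero_lt_top).2 fun i _ => hδ0 i,
    fun E hE hEδ => ?_⟩
  calc μ (𝒢.rMul (⋃ i, Ks i) E) = μ (⋃ i, 𝒢.rMul (Ks i) E) := by rw [rMul_iUnion_left]
    _ ≤ ∑ i, μ (𝒢.rMul (Ks i) E) := measure_iUnion_fintype_le μ _
    _ ≤ ∑ _i : Fin N, ε / N := Finset.sum_le_sum fun i _ =>
        hδ i E hE (hEδ.trans_le (Finset.inf_le (Finset.mem_univ i)))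
    _ = N * (ε / N) := by simp
    _ ≤ ε := ENNReal.mul_div_le

end IsDecomposable

namespace IsUSDecomposable

variable {𝒢} {N : ℕ} {K : Set G}

lemma isDecomposable (hK : 𝒢.IsUSDecomposable ℓ μ N K) : 𝒢.IsDecomposable ℓ μ K :=
  let ⟨Ks, hadm, hKs, _⟩ := hK
  ⟨N, Ks, hadm, hKs⟩

lemma inv_mem (hK : 𝒢.IsUSDecomposable ℓ μ N K) {γ : G} (hγ : γ ∈ K) : 𝒢.inv γ ∈ K := by
  obtain ⟨Ks, -, rfl, -, σ, hσ⟩ := hK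
  obtain ⟨i, hi⟩ := mem_iUnion.mp hγ
  exact mem_iUnion.mpr ⟨σ i, hσ i ▸ mem_image_of_mem _ hi⟩

lemma union {N₁ N₂ : ℕ} {K₁ K₂ : Set G} (h₁ : 𝒢.IsUSDecomposable ℓ μ N₁ K₁)
    (h₂ : 𝒢.IsUSDecomposable ℓ μ N₂ K₂) : 𝒢.IsUSDecomposable ℓ μ (N₁ + N₂) (K₁ ∪ K₂) := by
  obtain ⟨Ks₁, hadm₁, rfl, ⟨i₁, hu₁⟩, σ₁, hσ₁⟩ := h₁
  obtain ⟨Ks₂, hadm₂, rfl, -, σ₂, hσ₂⟩ := h₂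
  have hadm : ∀ j, 𝒢.IsAdmissible ℓ μ (Sum.elim Ks₁ Ks₂ j) := Sum.forall.2 ⟨hadm₁, hadm₂⟩
  have hσ : ∀ j, 𝒢.invSet (Sum.elim Ks₁ Ks₂ j) = Sum.elim Ks₁ Ks₂ (σ₁.sumCongr σ₂ j) :=
    Sum.forall.2 ⟨hσ₁, hσ₂⟩
  refine ⟨fun i => Sum.elim Ks₁ Ks₂ (finSumFinEquiv.symm i), fun i => hadm _, ?_,
    ⟨finSumFinEquiv (.inl i₁), by simpa using hu₁⟩,
    finSumFinEquiv.permCongr (σ₁.sumCongr σ₂), fun i => by simpa using hσ _⟩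
  rw [finSumFinEquiv.symm.surjective.iUnion_comp (Sum.elim Ks₁ Ks₂), iUnion_sum]
  rfl

end IsUSDecomposable

namespace DomainAsympExp

variable {𝒢} {Y : Set G} (hdom : 𝒢.DomainAsympExp ℓ μ Y)
include hdom

/-- Otherwise `A = ∅` would be a set to expand, with empty boundary. -/
lemma measureReal_pos : 0 < μ.real Y := by
  obtain ⟨C, -, -, K, hC, -, -, hexp⟩ := hdom (1 / 2) one_half_pos le_rfl
  simp only [← measureReal_def] at hexp
  refine measureReal_nonneg.lt_of_ne fun hY => ?_
  simpa using hexp ∅ .empty (empty_subset Y) (by simp [← hY]) (by simp [← hY])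

lemma exists_pos_le_measureReal_boundary [IsFiniteMeasure μ] (hY : MeasurableSet Y)
    {β : ℝ} (hβ1 : 1 / 2 ≤ β) (hβ : β < 1) :
    ∃ d : ℝ, 0 < d ∧ ∃ (L : ℝ) (N : ℕ) (K : Set G),
      𝒢.IsUSDecomposable ℓ μ N K ∧ lengthLE ℓ K L ∧
      ∀ A : Set G, MeasurableSet A → A ⊆ Y → μ.real Y / 2 < μ.real A →
        μ.real A ≤ β * μ.real Y → d ≤ μ.real ((𝒢.rMul K A \ A) ∩ Y) := by
  obtain ⟨C, L, N, K, hC, hK, hL, hexp⟩ := hdom (1 - β) (by linarith) (by linarith)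
  simp only [← measureReal_def] at hexp
  set ε := C * ((1 - β) * μ.real Y)
  have hε : 0 < ε := mul_pos hC (mul_pos (by linarith) hdom.measureReal_pos)
  obtain ⟨δ, hδ, hδK⟩ :=
    hK.isDecomposable.exists_pos_forall_measure_rMul_le (ENNReal.ofReal_pos.2 hε)
  refine ⟨(min δ 1).toReal, ENNReal.toReal_pos (lt_min hδ one_pos).ne'
      (ne_top_of_le_ne_top ENNReal.one_ne_top (min_le_right _ _)),
    L, N, K, hK, hL, fun A hA hAY hA2 hAβ => ?_⟩
  have hcompl : μ.real (Y \ A) = μ.real Y - μ.real A := measureReal_sdiff hAY hA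
  have hexpand : ε < μ.real (𝒢.rMul K ((𝒢.rMul K A \ A) ∩ Y)) :=
    calc ε ≤ C * μ.real (Y \ A) := mul_le_mul_of_nonneg_left (by linarith) hC.le
      _ < μ.real ((𝒢.rMul K (Y \ A) \ (Y \ A)) ∩ Y) :=
        hexp _ (hY.diff hA) sdiff_subset (by linarith) (by linarith)
      _ ≤ _ := measureReal_mono (𝒢.boundary_compl_subset fun _ => hK.inv_mem)
  refine ENNReal.toReal_mono (measure_ne_top _ _) (not_lt.1 fun hlt => hexpand.not_ge ?_)
  exact ENNReal.toReal_le_of_le_ofReal hε.le (hδK _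
    ((hK.isDecomposable.measurableSet_rMul hA).diff hA |>.inter hY)
    (hlt.trans_le (min_le_left _ _)))

end DomainAsympExp

end AlgGroupoid

theorem stmt5_general {G : Type*} [MeasurableSpace G] (𝒢 : AlgGroupoid G) (ℓ : G → ℝ)
    (μ : MeasureTheory.Measure G) [MeasureTheory.IsProbabilityMeasure μ]
    (Y : Set G) (hY : MeasurableSet Y)
    (hdom : 𝒢.DomainAsympExp ℓ μ Y)
    (α β : ℝ) (hα0 : 0 < α) (hα : α ≤ 1 / 2) (hβ1 : 1 / 2 ≤ β) (hβ : β < 1) :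
    ∃ (C L : ℝ) (N : ℕ) (K : Set G), 0 < C ∧
      𝒢.IsUSDecomposable ℓ μ N K ∧ AlgGroupoid.lengthLE ℓ K L ∧
      ∀ A : Set G, MeasurableSet A → A ⊆ Y →
        α * (μ Y).toReal ≤ (μ A).toReal → (μ A).toReal ≤ β * (μ Y).toReal →
        C * (μ A).toReal < (μ ((𝒢.rMul K A \ A) ∩ Y)).toReal := by
  obtain ⟨C, L₁, N₁, K₁, hC, hK₁, hL₁, hsmall⟩ := hdom α hα0 hα
  obtain ⟨d, hd, L₂, N₂, K₂, hK₂, hL₂, hlarge⟩ :=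
    hdom.exists_pos_le_measureReal_boundary hY hβ1 hβ
  refine ⟨min C (d / 2), max L₁ L₂, N₁ + N₂, K₁ ∪ K₂, lt_min hC (half_pos hd), hK₁.union hK₂,
    hL₁.union hL₂, fun A hA hAY hαA hAβ => ?_⟩
  simp only [← measureReal_def] at hsmall hαA hAβ ⊢
  have hmono : ∀ K ⊆ K₁ ∪ K₂, μ.real ((𝒢.rMul K A \ A) ∩ Y) ≤
      μ.real ((𝒢.rMul (K₁ ∪ K₂) A \ A) ∩ Y) := fun K hK =>
    measureReal_mono (inter_subset_inter_left _ (sdiff_subset_sdiff_left (𝒢.rMul_mono_left hK A)))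
  rcases le_or_gt (μ.real A) (μ.real Y / 2) with hA2 | hA2
  · calc min C (d / 2) * μ.real A ≤ C * μ.real A := by gcongr; exact min_le_left _ _
      _ < μ.real ((𝒢.rMul K₁ A \ A) ∩ Y) := hsmall A hA hAY hαA hA2
      _ ≤ _ := hmono K₁ subset_union_left
  · calc min C (d / 2) * μ.real A ≤ d / 2 * 1 := by
          gcongr
          exacts [min_le_right _ _, measureReal_le_one]
      _ < d := by linarith
      _ ≤ μ.real ((𝒢.rMul K₂ A \ A) ∩ Y) := hlarge A hA hAY hA2 hAβ
      _ ≤ _ := hmono K₂ subset_union_right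

/-- a domain of asymptotic expansion expands all sets of measure between
`α μ(Y)` and `β μ(Y)` for any `α ∈ (0,1/2]`, `β ∈ [1/2,1)`. -/
theorem stmt5 {G : Type*} [MeasurableSpace G] (𝒢 : AlgGroupoid G) (ℓ : G → ℝ)
    (μ : MeasureTheory.Measure G) [MeasureTheory.IsProbabilityMeasure μ]
    (Y : Set G) (hY : MeasurableSet Y) (hYsub : Y ⊆ 𝒢.unitSpace)
    (hdom : 𝒢.DomainAsympExp ℓ μ Y)
    (α β : ℝ) (hα0 : 0 < α) (hα : α ≤ 1 / 2) (hβ1 : 1 / 2 ≤ β) (hβ : β < 1) :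
    ∃ (C L : ℝ) (N : ℕ) (K : Set G), 0 < C ∧
      𝒢.IsUSDecomposable ℓ μ N K ∧ AlgGroupoid.lengthLE ℓ K L ∧
      ∀ A : Set G, MeasurableSet A → A ⊆ Y →
        α * (μ Y).toReal ≤ (μ A).toReal → (μ A).toReal ≤ β * (μ Y).toReal →
        C * (μ A).toReal < (μ ((𝒢.rMul K A \ A) ∩ Y)).toReal :=
  stmt5_general 𝒢 ℓ μ Y hY hdom α β hα0 hα hβ1 hβ
end

section
/- Let 𝓕 be the collection of (ε,K)-Følner sets in Y, modulo null sets, ordered by inclusion up to null sets. Then (𝓕/∼, ⊑) has maximal elements (provided it is nonempty). -/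
/-!
Følner sets in `Y` are preserved by removing a null set and by increasing unions: the boundary
of `⋃ Fₙ` is the increasing union of the sets `(r(K·Fₙ) \ ⋃ Fₘ) ∩ Y`, each inside the boundary
of `Fₙ`, so both Følner inequalities pass to the limit. Any such class has a maximal element up
to null sets, by exhaustion: starting from `F₀`, choose `Fₙ₊₁ ⊇ Fₙ` (up to null sets) whose
measure is within `1/n` of the supremum over all members containing `Fₙ`. Removing one null set
makes the sequence increasing; its union `F` is a member, and any member containing `F` has
measure at most `μ F`, hence equals `F` up to a null set.
-/

open MeasureTheory Set

/-- `F` is an `(ε,K)`-Følner set in `Y`. -/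
def AlgGroupoid.IsFolner {G : Type*} [MeasurableSpace G] (𝒢 : AlgGroupoid G)
    (μ : MeasureTheory.Measure G) (Y K : Set G) (ε : ℝ) (F : Set G) : Prop :=
  MeasurableSet F ∧ F ⊆ Y ∧ (μ F).toReal ≤ (μ Y).toReal / 2 ∧
    (μ ((𝒢.rMul K F \ F) ∩ Y)).toReal ≤ ε * (μ F).toReal

open Filter Topology
open scoped ENNReal

namespace MeasureTheory

variable {α : Type*} [MeasurableSpace α] {μ : Measure α}

theorem exists_null_monotone_sdiff_of_ae_le_succ {F : ℕ → Set α}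
    (hF : ∀ n, F n ≤ᵐ[μ] F (n + 1)) :
    ∃ N, MeasurableSet N ∧ μ N = 0 ∧ Monotone fun n => F n \ N := by
  refine ⟨toMeasurable μ (⋃ n, F n \ F (n + 1)), measurableSet_toMeasurable _ _, ?_, ?_⟩
  · rw [measure_toMeasurable]
    exact measure_iUnion_null fun n => ae_le_set.1 (hF n)
  · refine monotone_nat_of_le_succ fun n x hx => ⟨by_contra fun hx' => hx.2 ?_, hx.2⟩
    exact subset_toMeasurable _ _ (mem_iUnion.2 ⟨n, hx.1, hx'⟩)

theorem tendsto_measure_toReal_iUnion [IsFiniteMeasure μ] {F : ℕ → Set α}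
    (hF : Monotone F) :
    Tendsto (fun n => (μ (F n)).toReal) atTop (𝓝 (μ (⋃ n, F n)).toReal) :=
  (ENNReal.tendsto_toReal (measure_ne_top _ _)).comp (tendsto_measure_iUnion_atTop hF)

noncomputable def supMeasureAbove (μ : Measure α) (P : Set α → Prop) (A : Set α) : ℝ≥0∞ :=
  ⨆ B : {B // P B ∧ A ≤ᵐ[μ] B}, μ B

variable {P : Set α → Prop} {A : Set α}

theorem measure_le_supMeasureAbove {B : Set α} (hB : P B) (hAB : A ≤ᵐ[μ] B) :
    μ B ≤ supMeasureAbove μ P A :=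
  le_iSup (fun B : {B // P B ∧ A ≤ᵐ[μ] B} => μ B) ⟨B, hB, hAB⟩

variable [IsFiniteMeasure μ]

theorem exists_supMeasureAbove_le_add (hA : P A) {δ : ℝ≥0∞} (hδ : δ ≠ 0) :
    ∃ B, P B ∧ A ≤ᵐ[μ] B ∧ supMeasureAbove μ P A ≤ μ B + δ := by
  have : Nonempty {B // P B ∧ A ≤ᵐ[μ] B} := ⟨⟨A, hA, EventuallyLE.rfl⟩⟩
  have hfin : supMeasureAbove μ P A ≠ ∞ :=
    ((iSup_le fun B => measure_mono (subset_univ _)).trans_lt (measure_lt_top μ univ)).ne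
  have hlt : supMeasureAbove μ P A < ⨆ B : {B // P B ∧ A ≤ᵐ[μ] B}, (μ B + δ) := by
    rw [← ENNReal.iSup_add]
    exact ENNReal.lt_add_right hfin hδ
  obtain ⟨⟨B, hB, hAB⟩, hlt⟩ := lt_iSup_iff.1 hlt
  exact ⟨B, hB, hAB, hlt.le⟩

theorem exists_seq_supMeasureAbove_le {F₀ : Set α} (h₀ : P F₀) :
    ∃ F : ℕ → Set α, (∀ n, P (F n)) ∧ (∀ n, F n ≤ᵐ[μ] F (n + 1)) ∧
      ∀ n : ℕ, supMeasureAbove μ P (F n) ≤ μ (F (n + 1)) + (n : ℝ≥0∞)⁻¹ := by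
  have step (n : ℕ) (A : Set α) (hA : P A) :
      ∃ B, P B ∧ A ≤ᵐ[μ] B ∧ supMeasureAbove μ P A ≤ μ B + (n : ℝ≥0∞)⁻¹ :=
    exists_supMeasureAbove_le_add hA (ENNReal.inv_ne_zero.2 (ENNReal.natCast_ne_top n))
  choose! next hnextP hnext_ae hnext_sup using step
  let F : ℕ → Set α := fun n => Nat.rec (motive := fun _ => Set α) F₀ next n
  have hF (n : ℕ) : P (F n) := by
    induction n with
    | zero => exact h₀
    | succ n ih => exact hnextP n _ ih
  exact ⟨F, hF, fun n => hnext_ae n _ (hF n), fun n => hnext_sup n _ (hF n)⟩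

theorem exists_ae_maximal (hmeas : ∀ F, P F → MeasurableSet F)
    (hsdiff : ∀ F N, P F → MeasurableSet N → μ N = 0 → P (F \ N))
    (hiUnion : ∀ F : ℕ → Set α, Monotone F → (∀ n, P (F n)) → P (⋃ n, F n))
    {F₀ : Set α} (h₀ : P F₀) :
    ∃ F, P F ∧ ∀ F', P F' → F ≤ᵐ[μ] F' → F' ≤ᵐ[μ] F := by
  obtain ⟨F, hP, hF_ae, hF_sup⟩ := exists_seq_supMeasureAbove_le (μ := μ) h₀
  obtain ⟨N, hN, hN0, hmono⟩ := exists_null_monotone_sdiff_of_ae_le_succ hF_ae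
  have hG : P (⋃ n, F n \ N) := hiUnion _ hmono fun n => hsdiff _ _ (hP n) hN hN0
  have hFG (n : ℕ) : F n ≤ᵐ[μ] ⋃ n, F n \ N :=
    (sdiff_null_ae_eq_self hN0).symm.le.trans
      (subset_iUnion (fun n => F n \ N) n).eventuallyLE
  refine ⟨_, hG, fun F' hF' hGF' => ?_⟩
  have hle (n : ℕ) : μ F' ≤ μ (⋃ n, F n \ N) + (n : ℝ≥0∞)⁻¹ :=
    calc μ F' ≤ supMeasureAbove μ P (F n) :=
          measure_le_supMeasureAbove hF' ((hFG n).trans hGF')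
      _ ≤ μ (F (n + 1)) + (n : ℝ≥0∞)⁻¹ := hF_sup n
      _ ≤ μ (⋃ n, F n \ N) + (n : ℝ≥0∞)⁻¹ := add_le_add_left (measure_mono_ae (hFG _)) _
  have hlim : Tendsto (fun n : ℕ => μ (⋃ n, F n \ N) + (n : ℝ≥0∞)⁻¹) atTop
      (𝓝 (μ (⋃ n, F n \ N))) := by
    simpa using tendsto_const_nhds.add ENNReal.tendsto_inv_nat_nhds_zero
  exact (ae_eq_of_ae_subset_of_measure_ge hGF' (ge_of_tendsto' hlim hle)
    (hmeas _ hG).nullMeasurableSet (measure_ne_top μ _)).symm.le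

end MeasureTheory

namespace AlgGroupoid

variable {G : Type*} (𝒢 : AlgGroupoid G)

theorem rMul_mono (K : Set G) {A B : Set G} (h : A ⊆ B) : 𝒢.rMul K A ⊆ 𝒢.rMul K B :=
  image_mono fun _ hγ => ⟨hγ.1, h hγ.2⟩

theorem rMul_iUnion {ι : Sort*} (K : Set G) (A : ι → Set G) :
    𝒢.rMul K (⋃ i, A i) = ⋃ i, 𝒢.rMul K (A i) := by
  simp only [rMul, ← image_iUnion]
  congr 1
  ext γ
  simp

variable {𝒢} [MeasurableSpace G] {μ : Measure G} [IsFiniteMeasure μ] {Y K : Set G} {ε : ℝ}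

theorem IsFolner.sdiff_null {F N : Set G} (hF : 𝒢.IsFolner μ Y K ε F)
    (hN : MeasurableSet N) (hN0 : μ N = 0) : 𝒢.IsFolner μ Y K ε (F \ N) := by
  obtain ⟨hFm, hFY, hFhalf, hFbd⟩ := hF
  have hbd : ((𝒢.rMul K (F \ N) \ (F \ N)) ∩ Y : Set G) ≤ᵐ[μ]
      ((𝒢.rMul K F \ F) ∩ Y : Set G) := by
    refine ae_le_set.2 (measure_mono_null ?_ hN0)
    rintro x ⟨⟨⟨hxr, hxFN⟩, hxY⟩, hxbd⟩
    by_contra hxN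
    exact hxbd ⟨⟨𝒢.rMul_mono K sdiff_subset hxr, fun hxF => hxFN ⟨hxF, hxN⟩⟩, hxY⟩
  refine ⟨hFm.diff hN, sdiff_subset.trans hFY, ?_, ?_⟩ <;> rw [measure_sdiff_null hN0]
  · exact hFhalf
  · exact (ENNReal.toReal_mono (measure_ne_top _ _) (measure_mono_ae hbd)).trans hFbd

theorem isFolner_iUnion {F : ℕ → Set G} (hmono : Monotone F)
    (hF : ∀ n, 𝒢.IsFolner μ Y K ε (F n)) : 𝒢.IsFolner μ Y K ε (⋃ n, F n) := by
  let B : ℕ → Set G := fun n => (𝒢.rMul K (F n) \ ⋃ n, F n) ∩ Y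
  have hB : ⋃ n, B n = (𝒢.rMul K (⋃ n, F n) \ ⋃ n, F n) ∩ Y := by
    simp only [B, ← iUnion_inter, ← iUnion_sdiff, rMul_iUnion]
  have hBmono : Monotone B := fun m n hmn =>
    inter_subset_inter_left _ (sdiff_subset_sdiff_left (𝒢.rMul_mono K (hmono hmn)))
  have hlim := tendsto_measure_toReal_iUnion (μ := μ) hmono
  refine ⟨.iUnion fun n => (hF n).1, iUnion_subset fun n => (hF n).2.1,
    le_of_tendsto' hlim fun n => (hF n).2.2.1, ?_⟩
  refine le_of_tendsto_of_tendsto' (hB ▸ tendsto_measure_toReal_iUnion hBmono)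
    (hlim.const_mul ε) fun n => ?_
  calc (μ (B n)).toReal ≤ (μ ((𝒢.rMul K (F n) \ F n) ∩ Y)).toReal :=
        ENNReal.toReal_mono (measure_ne_top _ _) <| measure_mono <|
          inter_subset_inter_left _ (sdiff_subset_sdiff_right (subset_iUnion F n))
    _ ≤ ε * (μ (F n)).toReal := (hF n).2.2.2

end AlgGroupoid

theorem stmt7_general {G : Type*} [MeasurableSpace G] (𝒢 : AlgGroupoid G)
    (μ : MeasureTheory.Measure G) [MeasureTheory.IsProbabilityMeasure μ]
    (Y K : Set G) (ε : ℝ)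
    (F₀ : Set G) (hF₀ : 𝒢.IsFolner μ Y K ε F₀) :
    ∃ F : Set G, 𝒢.IsFolner μ Y K ε F ∧
      ∀ F' : Set G, 𝒢.IsFolner μ Y K ε F' → μ (F \ F') = 0 → μ (F' \ F) = 0 := by
  obtain ⟨F, hF, hmax⟩ := exists_ae_maximal (μ := μ) (fun _ hF => hF.1)
    (fun _ _ hF hN hN0 => hF.sdiff_null hN hN0)
    (fun _ => AlgGroupoid.isFolner_iUnion) hF₀
  exact ⟨F, hF, fun F' hF' hFF' => ae_le_set.1 (hmax F' hF' (ae_le_set.2 hFF'))⟩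

/-- the partially ordered set of `(ε,K)`-Følner sets in `Y` modulo null
sets, ordered by inclusion up to null sets, has maximal elements (provided it is
nonempty). -/
theorem stmt7 {G : Type*} [MeasurableSpace G] (𝒢 : AlgGroupoid G) (ℓ : G → ℝ)
    (μ : MeasureTheory.Measure G) [MeasureTheory.IsProbabilityMeasure μ]
    (Y K : Set G) (hY : MeasurableSet Y) (hYsub : Y ⊆ 𝒢.unitSpace)
    (hK : 𝒢.IsDecomposable ℓ μ K) (ε : ℝ) (hε : 0 < ε)
    (F₀ : Set G) (hF₀ : 𝒢.IsFolner μ Y K ε F₀) :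
    ∃ F : Set G, 𝒢.IsFolner μ Y K ε F ∧
      ∀ F' : Set G, 𝒢.IsFolner μ Y K ε F' → μ (F \ F') = 0 → μ (F' \ F) = 0 :=
  stmt7_general 𝒢 μ Y K ε F₀ hF₀
end

section
/- Let F ⊆ Y be a maximal (ε,K)-Følner set in Y (maximal with respect to inclusion up to null-sets). Then for any measurable A ⊆ Y \ F with 0 < μ(A) ≤ μ(Y)/2 − μ(F), one has μ(((r(K·A) \ A) ∩ Y) \ F) > ε·μ(A). -/
open MeasureTheory Set

/-- if `F` is a maximal `(ε,K)`-Følner set in `Y`, then every measurable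
`A ⊆ Y \ F` with `0 < μ(A) ≤ μ(Y)/2 − μ(F)` satisfies
`μ(((r(K·A) \ A) ∩ Y) \ F) > ε μ(A)`. -/
theorem stmt8 {G : Type*} [MeasurableSpace G] (𝒢 : AlgGroupoid G) (ℓ : G → ℝ)
    (μ : MeasureTheory.Measure G) [MeasureTheory.IsProbabilityMeasure μ]
    (Y K : Set G) (hY : MeasurableSet Y) (hYsub : Y ⊆ 𝒢.unitSpace)
    (hK : 𝒢.IsDecomposable ℓ μ K) (ε : ℝ) (hε : 0 < ε)
    (F : Set G) (hF : 𝒢.IsFolner μ Y K ε F)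
    (hmax : ∀ F' : Set G, 𝒢.IsFolner μ Y K ε F' → μ (F \ F') = 0 → μ (F' \ F) = 0) :
    ∀ A : Set G, MeasurableSet A → A ⊆ Y \ F → 0 < (μ A).toReal →
      (μ A).toReal ≤ (μ Y).toReal / 2 - (μ F).toReal →
      ε * (μ A).toReal < (μ (((𝒢.rMul K A \ A) ∩ Y) \ F)).toReal := by

  obtain ⟨hFmeas, hFY, hFhalf, hFbd⟩ := hF
  intro A hA hAY hA0 hAle
  by_contra hcon
  push_neg at hcon
  have hdis : Disjoint F A := by
    rw [Set.disjoint_right]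
    intro x hx
    exact (hAY hx).2
  have hμFA : μ (F ∪ A) = μ F + μ A := measure_union hdis hA
  have hFAreal : (μ (F ∪ A)).toReal = (μ F).toReal + (μ A).toReal := by
    rw [hμFA, ENNReal.toReal_add (measure_ne_top μ F) (measure_ne_top μ A)]
  have hrUnion : 𝒢.rMul K (F ∪ A) = 𝒢.rMul K F ∪ 𝒢.rMul K A := by
    unfold AlgGroupoid.rMul
    have : {γ | γ ∈ K ∧ 𝒢.s γ ∈ F ∪ A} = {γ | γ ∈ K ∧ 𝒢.s γ ∈ F} ∪ {γ | γ ∈ K ∧ 𝒢.s γ ∈ A} := by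
      ext γ
      simp only [Set.mem_setOf_eq, Set.mem_union]
      tauto
    rw [this, Set.image_union]
  have hsub : (𝒢.rMul K (F ∪ A) \ (F ∪ A)) ∩ Y ⊆
      ((𝒢.rMul K F \ F) ∩ Y) ∪ (((𝒢.rMul K A \ A) ∩ Y) \ F) := by
    intro x hx
    obtain ⟨⟨hxr, hxn⟩, hxY⟩ := hx
    rw [hrUnion] at hxr
    rcases hxr with h | h
    · exact Or.inl ⟨⟨h, fun hxF => hxn (Or.inl hxF)⟩, hxY⟩
    · exact Or.inr ⟨⟨⟨h, fun hxA => hxn (Or.inr hxA)⟩, hxY⟩,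
        fun hxF => hxn (Or.inl hxF)⟩
  have hbd : (μ ((𝒢.rMul K (F ∪ A) \ (F ∪ A)) ∩ Y)).toReal ≤
      (μ ((𝒢.rMul K F \ F) ∩ Y)).toReal + (μ (((𝒢.rMul K A \ A) ∩ Y) \ F)).toReal := by
    have h1 : μ ((𝒢.rMul K (F ∪ A) \ (F ∪ A)) ∩ Y) ≤
        μ ((𝒢.rMul K F \ F) ∩ Y) + μ (((𝒢.rMul K A \ A) ∩ Y) \ F) :=
      (measure_mono hsub).trans (measure_union_le _ _)
    calc (μ ((𝒢.rMul K (F ∪ A) \ (F ∪ A)) ∩ Y)).toReal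
        ≤ (μ ((𝒢.rMul K F \ F) ∩ Y) + μ (((𝒢.rMul K A \ A) ∩ Y) \ F)).toReal := by
          apply ENNReal.toReal_mono _ h1
          exact ENNReal.add_ne_top.mpr ⟨measure_ne_top μ _, measure_ne_top μ _⟩
      _ = (μ ((𝒢.rMul K F \ F) ∩ Y)).toReal + (μ (((𝒢.rMul K A \ A) ∩ Y) \ F)).toReal :=
          ENNReal.toReal_add (measure_ne_top μ _) (measure_ne_top μ _)
  have hFA : 𝒢.IsFolner μ Y K ε (F ∪ A) := by
    refine ⟨hFmeas.union hA, Set.union_subset hFY (fun x hx => (hAY hx).1), ?_, ?_⟩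
    · rw [hFAreal]; linarith
    · rw [hFAreal]
      calc (μ ((𝒢.rMul K (F ∪ A) \ (F ∪ A)) ∩ Y)).toReal
          ≤ (μ ((𝒢.rMul K F \ F) ∩ Y)).toReal + (μ (((𝒢.rMul K A \ A) ∩ Y) \ F)).toReal := hbd
        _ ≤ ε * (μ F).toReal + ε * (μ A).toReal := add_le_add hFbd hcon
        _ = ε * ((μ F).toReal + (μ A).toReal) := by ring
  have hnull : μ ((F ∪ A) \ F) = 0 := by
    apply hmax (F ∪ A) hFA
    rw [Set.diff_eq_empty.mpr Set.subset_union_left, measure_empty]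
  have hAF : (F ∪ A) \ F = A := by
    rw [Set.union_diff_left]
    exact hdis.symm.sdiff_eq_left
  rw [hAF] at hnull
  rw [hnull] at hA0
  simp at hA0
end

section
/- Let K = ⋃_{i=1}^N K_i be a unital symmetric decomposition into admissible bisections of a groupoid 𝒢, Y ⊆ 𝒢⁽⁰⁾ measurable, and let μ̃_{Y,K} be the measure on Y defined by dμ̃_{Y,K} = σ_{Y,K}·d(μ|_Y), where σ_{Y,K}(x) = Σ_{i ∈ K_{Y,x}} 𝔕(K_i,x)^{1/2}, K_{Y,x} = {i : x ∈ s(K_i) and τ_{K_i}(x) ∈ Y}, and 𝔕(K_i,x) is the Radon–Nikodym derivative d(τ_{K_i}⁻¹)_*(μ|_{r(K_i)})/d(μ|_{s(K_i)}) at x. Then for every measurable A ⊆ Y, μ(A) ≤ μ̃_{Y,K}(A) ≤ N·√(μ(A)·μ(Y)); in particular μ̃_{Y,K} is equivalent to μ|_Y. -/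
open MeasureTheory Set

open MeasureTheory in
/-- The density `σ_{Y,K}(x) = Σ_{i ∈ K_{Y,x}} 𝔕(K_i,x)^{1/2}`, where `sK i = s(K_i)`,
`τ i` realises `τ_{K_i}` and `ρ i` is the Radon–Nikodym derivative `𝔕(K_i,·)`. -/
noncomputable def sigmaYK {G : Type*} (N : ℕ) (sK : Fin N → Set G)
    (τ : Fin N → G → G) (ρ : Fin N → G → ℝ) (Y : Set G) (x : G) : ℝ :=
  ∑ i, Set.indicator {z | z ∈ sK i ∧ τ i z ∈ Y} (fun z => Real.sqrt (ρ i z)) x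

/-! On `Y` the unit bisection contributes the term `√𝔕 = 1` to `σ_{Y,K}`, which gives the lower
bound. For the upper bound, write `∫_A σ_{Y,K} dμ = Σᵢ ∫_{A ∩ Eᵢ} √𝔕(K_i,·) dμ` with
`Eᵢ = {x : i ∈ K_{Y,x}}`, and estimate each of the `N` terms by Cauchy–Schwarz:
`∫_{A ∩ Eᵢ} √𝔕(K_i,·) dμ ≤ μ(τ_{K_i}(A ∩ Eᵢ))^{1/2} μ(A ∩ Eᵢ)^{1/2} ≤ μ(Y)^{1/2} μ(A)^{1/2}`,
since `𝔕(K_i,·)` integrates to the measure of the image and `τ_{K_i}` maps `Eᵢ` into `Y`. -/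

theorem ENNReal.ofReal_sqrt (x : ℝ) : ENNReal.ofReal √x = ENNReal.ofReal x ^ (1 / 2 : ℝ) := by
  rcases le_total 0 x with hx | hx
  · rw [Real.sqrt_eq_rpow, ENNReal.ofReal_rpow_of_nonneg hx (by norm_num)]
  · rw [Real.sqrt_eq_zero'.2 hx, ENNReal.ofReal_of_nonpos hx, ENNReal.ofReal_zero,
      ENNReal.zero_rpow_of_pos (by norm_num)]

theorem MeasureTheory.lintegral_rpow_half_le {α : Type*} [MeasurableSpace α] {μ : Measure α}
    {f : α → ENNReal} (hf : AEMeasurable f μ) :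
    ∫⁻ x, f x ^ (1 / 2 : ℝ) ∂μ ≤ (∫⁻ x, f x ∂μ) ^ (1 / 2 : ℝ) * μ univ ^ (1 / 2 : ℝ) := by
  simpa using ENNReal.lintegral_mul_norm_pow_le hf (aemeasurable_const (b := 1))
    (p := 1 / 2) (q := 1 / 2) (by norm_num) (by norm_num) (by norm_num)

theorem AlgGroupoid.s_image_unitSpace {G : Type*} (𝒢 : AlgGroupoid G) :
    𝒢.s '' 𝒢.unitSpace = 𝒢.unitSpace := by
  ext x
  constructor
  · rintro ⟨γ, hγ, rfl⟩
    exact 𝒢.s_mem γ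
  · exact fun hx => ⟨x, hx, 𝒢.s_unit x hx⟩

section Jacobian

variable {α : Type*} [MeasurableSpace α] {μ : Measure α}

/-- For `S = s(K)` and `τ = τ_K`, this says `ρ = 𝔕(K, ·)`. -/
def IsJacobianOn (μ : Measure α) (τ : α → α) (ρ : α → ℝ) (S : Set α) : Prop :=
  ∀ B : Set α, MeasurableSet B → B ⊆ S → μ (τ '' B) = ∫⁻ x in B, ENNReal.ofReal (ρ x) ∂μ

variable {τ : α → α} {ρ : α → ℝ} {S A B : Set α}

theorem IsJacobianOn.ae_eq_one_of_eqOn_id [SigmaFinite μ] (h : IsJacobianOn μ τ ρ S)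
    (hρ : Measurable ρ) (hA : MeasurableSet A) (hAS : A ⊆ S) (hτA : EqOn τ id A) :
    ∀ᵐ x ∂μ.restrict A, ρ x = 1 := by
  have hone : (fun x => ENNReal.ofReal (ρ x)) =ᵐ[μ.restrict A] 1 := by
    refine ae_eq_of_forall_setLIntegral_eq_of_sigmaFinite hρ.ennreal_ofReal measurable_const
      fun B hB _ => ?_
    rw [Measure.restrict_restrict hB, ← h _ (hB.inter hA) (inter_subset_right.trans hAS),
      (hτA.mono inter_subset_right).image_eq_self, Pi.one_def, setLIntegral_one]
  filter_upwards [hone] with x hx using ENNReal.ofReal_eq_one.1 hx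

theorem IsJacobianOn.setLIntegral_sqrt_le (h : IsJacobianOn μ τ ρ S) (hρ : Measurable ρ)
    (hB : MeasurableSet B) (hBS : B ⊆ S) :
    ∫⁻ x in B, ENNReal.ofReal √(ρ x) ∂μ ≤ μ (τ '' B) ^ (1 / 2 : ℝ) * μ B ^ (1 / 2 : ℝ) := by
  simp_rw [ENNReal.ofReal_sqrt]
  simpa only [← h B hB hBS, Measure.restrict_apply_univ] using
    lintegral_rpow_half_le (μ := μ.restrict B) hρ.ennreal_ofReal.aemeasurable

end Jacobian

section sigmaYK

variable {α : Type*} {N : ℕ} {sK : Fin N → Set α} {τ : Fin N → α → α} {ρ : Fin N → α → ℝ}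
  {Y A : Set α}

/-- The set of `x` with `i ∈ K_{Y,x}`. -/
def returnSet (sK : Fin N → Set α) (τ : Fin N → α → α) (Y : Set α) (i : Fin N) : Set α :=
  {z | z ∈ sK i ∧ τ i z ∈ Y}

theorem ofReal_sigmaYK (x : α) :
    ENNReal.ofReal (sigmaYK N sK τ ρ Y x) =
      ∑ i, (returnSet sK τ Y i).indicator (fun z => ENNReal.ofReal √(ρ i z)) x := by
  rw [sigmaYK, ENNReal.ofReal_sum_of_nonneg fun i _ =>
    indicator_nonneg (fun _ _ => Real.sqrt_nonneg _) _]
  exact Finset.sum_congr rfl fun i _ =>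
    (congr_fun (indicator_comp_of_zero ENNReal.ofReal_zero) x).symm

variable [MeasurableSpace α] {μ : Measure α}

theorem measurableSet_returnSet (hsK : ∀ i, MeasurableSet (sK i)) (hτ : ∀ i, Measurable (τ i))
    (hY : MeasurableSet Y) (i : Fin N) : MeasurableSet (returnSet sK τ Y i) :=
  (hsK i).inter (hτ i hY)

theorem setLIntegral_sigmaYK (hsK : ∀ i, MeasurableSet (sK i))
    (hτ : ∀ i, Measurable (τ i)) (hρ : ∀ i, Measurable (ρ i)) (hY : MeasurableSet Y) (A : Set α) :
    ∫⁻ x in A, ENNReal.ofReal (sigmaYK N sK τ ρ Y x) ∂μ =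
      ∑ i, ∫⁻ x in returnSet sK τ Y i ∩ A, ENNReal.ofReal √(ρ i x) ∂μ := by
  have hE := measurableSet_returnSet hsK hτ hY
  simp_rw [ofReal_sigmaYK]
  rw [lintegral_finsetSum _ fun i _ => (hρ i).sqrt.ennreal_ofReal.indicator (hE i)]
  exact Finset.sum_congr rfl fun i _ => by
    rw [lintegral_indicator (hE i), Measure.restrict_restrict (hE i)]

theorem measure_le_setLIntegral_sigmaYK [SigmaFinite μ] {i : Fin N}
    (hsK : ∀ i, MeasurableSet (sK i)) (hτ : ∀ i, Measurable (τ i)) (hρ : ∀ i, Measurable (ρ i))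
    (hY : MeasurableSet Y)
    (hjac : IsJacobianOn μ (τ i) (ρ i) (sK i)) (hA : MeasurableSet A) (hAS : A ⊆ sK i)
    (hτA : EqOn (τ i) id A) (hAY : A ⊆ Y) :
    μ A ≤ ∫⁻ x in A, ENNReal.ofReal (sigmaYK N sK τ ρ Y x) ∂μ := by
  have hEA : returnSet sK τ Y i ∩ A = A :=
    inter_eq_right.2 fun x hx => ⟨hAS hx, (hτA hx).symm ▸ hAY hx⟩
  calc μ A = ∫⁻ x in A, 1 ∂μ := (setLIntegral_one A).symm
    _ = ∫⁻ x in returnSet sK τ Y i ∩ A, ENNReal.ofReal √(ρ i x) ∂μ := by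
      rw [hEA]
      refine lintegral_congr_ae ?_
      filter_upwards [hjac.ae_eq_one_of_eqOn_id (hρ i) hA hAS hτA] with x hx
      simp [hx]
    _ ≤ ∑ j, ∫⁻ x in returnSet sK τ Y j ∩ A, ENNReal.ofReal √(ρ j x) ∂μ :=
      Finset.single_le_sum (f := fun j =>
        ∫⁻ x in returnSet sK τ Y j ∩ A, ENNReal.ofReal √(ρ j x) ∂μ)
        (fun _ _ => zero_le) (Finset.mem_univ i)
    _ = _ := (setLIntegral_sigmaYK hsK hτ hρ hY A).symm

theorem setLIntegral_sigmaYK_le (hsK : ∀ i, MeasurableSet (sK i))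
    (hτ : ∀ i, Measurable (τ i)) (hρ : ∀ i, Measurable (ρ i)) (hY : MeasurableSet Y)
    (hjac : ∀ i, IsJacobianOn μ (τ i) (ρ i) (sK i)) (hA : MeasurableSet A) :
    ∫⁻ x in A, ENNReal.ofReal (sigmaYK N sK τ ρ Y x) ∂μ ≤ N * (μ A * μ Y) ^ (1 / 2 : ℝ) := by
  rw [setLIntegral_sigmaYK hsK hτ hρ hY]
  calc _ ≤ ∑ _i : Fin N, (μ A * μ Y) ^ (1 / 2 : ℝ) := Finset.sum_le_sum fun i _ => ?_
    _ = _ := by simp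
  have hEA : MeasurableSet (returnSet sK τ Y i ∩ A) :=
    (measurableSet_returnSet hsK hτ hY i).inter hA
  calc _ ≤ μ (τ i '' (returnSet sK τ Y i ∩ A)) ^ (1 / 2 : ℝ) *
          μ (returnSet sK τ Y i ∩ A) ^ (1 / 2 : ℝ) :=
        (hjac i).setLIntegral_sqrt_le (hρ i) hEA fun x hx => hx.1.1
    _ ≤ μ Y ^ (1 / 2 : ℝ) * μ A ^ (1 / 2 : ℝ) := by
      gcongr
      · rintro _ ⟨x, hx, rfl⟩
        exact hx.1.2
      · exact inter_subset_right
    _ = (μ A * μ Y) ^ (1 / 2 : ℝ) := by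
      rw [ENNReal.mul_rpow_of_nonneg _ _ (by norm_num), mul_comm]

end sigmaYK

open MeasureTheory in
theorem stmt10_general {G : Type*} [MeasurableSpace G] (𝒢 : AlgGroupoid G) (ℓ : G → ℝ)
    (μ : Measure G) [IsProbabilityMeasure μ]
    (N : ℕ) (Ks : Fin N → Set G)
    (hadm : ∀ i, 𝒢.IsAdmissible ℓ μ (Ks i))
    (hunital : ∃ i, Ks i = 𝒢.unitSpace)
    (Y : Set G) (hY : MeasurableSet Y) (hYsub : Y ⊆ 𝒢.unitSpace)
    (τ : Fin N → G → G)
    (hτ : ∀ i, ∀ γ ∈ Ks i, τ i (𝒢.s γ) = 𝒢.r γ)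
    (hτmeas : ∀ i, Measurable (τ i))
    (ρ : Fin N → G → ℝ) (hρmeas : ∀ i, Measurable (ρ i))
    (hρ : ∀ i, ∀ A : Set G, MeasurableSet A → A ⊆ 𝒢.s '' Ks i →
      μ (τ i '' A) = ∫⁻ x in A, ENNReal.ofReal (ρ i x) ∂μ)
    (A : Set G) (hA : MeasurableSet A) (hAY : A ⊆ Y) :
    μ A ≤ ∫⁻ x in A,
        ENNReal.ofReal (sigmaYK N (fun i => 𝒢.s '' Ks i) τ ρ Y x) ∂μ ∧
    (∫⁻ x in A,
        ENNReal.ofReal (sigmaYK N (fun i => 𝒢.s '' Ks i) τ ρ Y x) ∂μ).toReal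
      ≤ N * Real.sqrt ((μ A).toReal * (μ Y).toReal) ∧
    ((∫⁻ x in A,
        ENNReal.ofReal (sigmaYK N (fun i => 𝒢.s '' Ks i) τ ρ Y x) ∂μ) = 0 ↔
      μ A = 0) := by
  obtain ⟨i₀, hi₀⟩ := hunital
  have hsK : ∀ i, MeasurableSet (𝒢.s '' Ks i) := fun i => (hadm i).source_meas
  have hAunit : A ⊆ 𝒢.unitSpace := hAY.trans hYsub
  have hτ₀ : EqOn (τ i₀) id A := fun x hx => by
    simpa [𝒢.s_unit x (hAunit hx), 𝒢.r_unit x (hAunit hx)] using hτ i₀ x (hi₀ ▸ hAunit hx)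
  have lower := measure_le_setLIntegral_sigmaYK hsK hτmeas hρmeas hY (hρ i₀) hA
    (by rwa [hi₀, 𝒢.s_image_unitSpace]) hτ₀ hAY
  have upper := setLIntegral_sigmaYK_le hsK hτmeas hρmeas hY hρ hA
  refine ⟨lower, ?_, fun h0 => le_antisymm (h0 ▸ lower) zero_le,
    fun h0 => setLIntegral_measure_zero _ _ h0⟩
  calc _ ≤ (N * (μ A * μ Y) ^ (1 / 2 : ℝ)).toReal :=
        ENNReal.toReal_mono (by finiteness) upper
    _ = N * Real.sqrt ((μ A).toReal * (μ Y).toReal) := by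
      rw [ENNReal.toReal_mul, ENNReal.toReal_natCast, ← ENNReal.toReal_rpow,
        ENNReal.toReal_mul, Real.sqrt_eq_rpow]

open MeasureTheory in
/-- for a unital symmetric decomposition `K = ⋃ᵢ Kᵢ` and the measure
`dμ̃_{Y,K} = σ_{Y,K} d(μ|_Y)`, every measurable `A ⊆ Y` satisfies
`μ(A) ≤ μ̃_{Y,K}(A) ≤ N √(μ(A) μ(Y))`; in particular `μ̃_{Y,K}` and `μ|_Y` have the
same null sets. -/
theorem stmt10 {G : Type*} [MeasurableSpace G] (𝒢 : AlgGroupoid G) (ℓ : G → ℝ)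
    (μ : Measure G) [IsProbabilityMeasure μ]
    (N : ℕ) (Ks : Fin N → Set G)
    (hadm : ∀ i, 𝒢.IsAdmissible ℓ μ (Ks i))
    (hunital : ∃ i, Ks i = 𝒢.unitSpace)
    (hsymm : ∃ σ : Equiv.Perm (Fin N), ∀ i, 𝒢.invSet (Ks i) = Ks (σ i))
    (Y : Set G) (hY : MeasurableSet Y) (hYsub : Y ⊆ 𝒢.unitSpace)
    (τ : Fin N → G → G)
    (hτ : ∀ i, ∀ γ ∈ Ks i, τ i (𝒢.s γ) = 𝒢.r γ)
    (hτmeas : ∀ i, Measurable (τ i))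
    (ρ : Fin N → G → ℝ) (hρ0 : ∀ i x, 0 ≤ ρ i x) (hρmeas : ∀ i, Measurable (ρ i))
    (hρ : ∀ i, ∀ A : Set G, MeasurableSet A → A ⊆ 𝒢.s '' Ks i →
      μ (τ i '' A) = ∫⁻ x in A, ENNReal.ofReal (ρ i x) ∂μ)
    (A : Set G) (hA : MeasurableSet A) (hAY : A ⊆ Y) :
    μ A ≤ ∫⁻ x in A,
        ENNReal.ofReal (sigmaYK N (fun i => 𝒢.s '' Ks i) τ ρ Y x) ∂μ ∧
    (∫⁻ x in A,
        ENNReal.ofReal (sigmaYK N (fun i => 𝒢.s '' Ks i) τ ρ Y x) ∂μ).toReal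
      ≤ N * Real.sqrt ((μ A).toReal * (μ Y).toReal) ∧
    ((∫⁻ x in A,
        ENNReal.ofReal (sigmaYK N (fun i => 𝒢.s '' Ks i) τ ρ Y x) ∂μ) = 0 ↔
      μ A = 0) :=
  stmt10_general 𝒢 ℓ μ N Ks hadm hunital Y hY hYsub τ hτ hτmeas ρ hρmeas hρ A hA hAY
end

section
/- Let Y be a measurable subset of the unit space of a groupoid 𝒢. (a) If Y is a domain of (C,N,L)-expansion with Radon–Nikodym ratio bounded by θ, then Y is a domain of Markov (C/(Nθ), N, L)-expansion. (b) If Y is a domain of Markov (κ,N,L)-expansion with ratio bounded by θ, then Y is a domain of (κ/(N√θ + κ), N, L)-expansion. -/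
open MeasureTheory Set

namespace AlgGroupoid

open MeasureTheory

variable {G : Type*} [MeasurableSpace G] (𝒢 : AlgGroupoid G)

/-- The density `σ_{Y,K}(x) = Σ_{i ∈ K_{Y,x}} 𝔕(K_i,x)^{1/2}`. -/
noncomputable def sigmaY (N : ℕ) (Ks : Fin N → Set G) (τ : Fin N → G → G)
    (ρ : Fin N → G → ℝ) (Y : Set G) (x : G) : ℝ :=
  ∑ i, Set.indicator {z | z ∈ 𝒢.s '' Ks i ∧ τ i z ∈ Y} (fun z => Real.sqrt (ρ i z)) x

/-- The measure `μ̃_{Y,K}(A) = ∫_A σ_{Y,K} dμ`. -/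
noncomputable def tildeMu (μ : Measure G) (N : ℕ) (Ks : Fin N → Set G)
    (τ : Fin N → G → G) (ρ : Fin N → G → ℝ) (Y A : Set G) : ENNReal :=
  ∫⁻ x in A, ENNReal.ofReal (𝒢.sigmaY N Ks τ ρ Y x) ∂μ

/-- The `μ̃`-size of the boundary `|∂_{Π_{Y,K}}(A)|_{μ̃}` of `A` for the normalised
local Markov kernel `Π_{Y,K}`: after cancelling the normalisation `σ_{Y,K}` against
the density of `μ̃`, it equals `∫_A Σ_{i : τᵢ x ∈ Y \ A} √(ρᵢ x) dμ(x)`. -/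
noncomputable def markovBoundary (μ : Measure G) (N : ℕ) (Ks : Fin N → Set G)
    (τ : Fin N → G → G) (ρ : Fin N → G → ℝ) (Y A : Set G) : ℝ :=
  ∫ x in A, (∑ i, Set.indicator {z | z ∈ 𝒢.s '' Ks i ∧ τ i z ∈ Y \ A}
    (fun z => Real.sqrt (ρ i z)) x) ∂μ

/-- Data of a unital symmetric decomposition `⋃ᵢ Kᵢ` of length `≤ L` into `N`
admissible bisections, together with the partial maps `τᵢ = τ_{Kᵢ}` and the
Radon–Nikodym derivatives `ρᵢ = 𝔕(Kᵢ,·)`. -/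
structure DecompData (ℓ : G → ℝ) (μ : Measure G) (N : ℕ) (L : ℝ)
    (Ks : Fin N → Set G) (τ : Fin N → G → G) (ρ : Fin N → G → ℝ) : Prop where
  adm : ∀ i, 𝒢.IsAdmissible ℓ μ (Ks i)
  unital : ∃ i, Ks i = 𝒢.unitSpace
  symm : ∃ σ : Equiv.Perm (Fin N), ∀ i, 𝒢.invSet (Ks i) = Ks (σ i)
  lenLE : ∀ i, ∀ γ ∈ Ks i, ℓ γ ≤ L
  tau_spec : ∀ i, ∀ γ ∈ Ks i, τ i (𝒢.s γ) = 𝒢.r γ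
  tau_meas : ∀ i, Measurable (τ i)
  rho_nonneg : ∀ i x, 0 ≤ ρ i x
  rho_meas : ∀ i, Measurable (ρ i)
  rho_spec : ∀ i, ∀ A : Set G, MeasurableSet A → A ⊆ 𝒢.s '' Ks i →
    μ (τ i '' A) = ∫⁻ x in A, ENNReal.ofReal (ρ i x) ∂μ

/-- The ratio condition `1/θ ≤ 𝔕(Kᵢ,x) ≤ θ` for `x ∈ Y` with `τ_{Kᵢ}(x) ∈ Y`. -/
def RatioBounded (N : ℕ) (Ks : Fin N → Set G) (τ : Fin N → G → G)
    (ρ : Fin N → G → ℝ) (θ : ℝ) (Y : Set G) : Prop :=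
  ∀ i x, x ∈ 𝒢.s '' Ks i → x ∈ Y → τ i x ∈ Y → 1 / θ ≤ ρ i x ∧ ρ i x ≤ θ

/-- `K` `C`-expands within `Y`. -/
def ExpandsOn (μ : Measure G) (C : ℝ) (K Y : Set G) : Prop :=
  ∀ A : Set G, MeasurableSet A → A ⊆ Y → 0 < (μ A).toReal →
    (μ A).toReal ≤ (μ Y).toReal / 2 →
    C * (μ A).toReal < (μ ((𝒢.rMul K A \ A) ∩ Y)).toReal

/-- The Cheeger constant of the normalised local Markov kernel `Π_{Y,K}` on
`(Y, μ̃_{Y,K})` is greater than `C`. -/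
def CheegerGT (μ : Measure G) (N : ℕ) (Ks : Fin N → Set G) (τ : Fin N → G → G)
    (ρ : Fin N → G → ℝ) (Y : Set G) (C : ℝ) : Prop :=
  ∀ A : Set G, MeasurableSet A → A ⊆ Y → 0 < 𝒢.tildeMu μ N Ks τ ρ Y A →
    (𝒢.tildeMu μ N Ks τ ρ Y A).toReal ≤ (𝒢.tildeMu μ N Ks τ ρ Y Y).toReal / 2 →
    C * (𝒢.tildeMu μ N Ks τ ρ Y A).toReal < 𝒢.markovBoundary μ N Ks τ ρ Y A

/-- `Y` is a domain of `(C,N,L)`-expansion (no ratio condition). -/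
def IsDomainExp (ℓ : G → ℝ) (μ : Measure G) (C : ℝ) (N : ℕ) (L : ℝ)
    (Y : Set G) : Prop :=
  ∃ (Ks : Fin N → Set G) (τ : Fin N → G → G) (ρ : Fin N → G → ℝ),
    𝒢.DecompData ℓ μ N L Ks τ ρ ∧ 𝒢.ExpandsOn μ C (⋃ i, Ks i) Y

/-- `Y` is a domain of `(C,N,L)`-expansion with ratio bounded by `θ`. -/
def IsDomainExpRatio (ℓ : G → ℝ) (μ : Measure G) (C : ℝ) (N : ℕ) (L θ : ℝ)
    (Y : Set G) : Prop :=
  ∃ (Ks : Fin N → Set G) (τ : Fin N → G → G) (ρ : Fin N → G → ℝ),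
    𝒢.DecompData ℓ μ N L Ks τ ρ ∧ 𝒢.ExpandsOn μ C (⋃ i, Ks i) Y ∧
    𝒢.RatioBounded N Ks τ ρ θ Y

/-- `Y` is a domain of Markov `(C,N,L)`-expansion. -/
def IsDomainMarkovExp (ℓ : G → ℝ) (μ : Measure G) (C : ℝ) (N : ℕ) (L : ℝ)
    (Y : Set G) : Prop :=
  ∃ (Ks : Fin N → Set G) (τ : Fin N → G → G) (ρ : Fin N → G → ℝ),
    𝒢.DecompData ℓ μ N L Ks τ ρ ∧ 𝒢.CheegerGT μ N Ks τ ρ Y C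

/-- `Y` is a domain of Markov `(C,N,L)`-expansion with ratio bounded by `θ`. -/
def IsDomainMarkovExpRatio (ℓ : G → ℝ) (μ : Measure G) (C : ℝ) (N : ℕ) (L θ : ℝ)
    (Y : Set G) : Prop :=
  ∃ (Ks : Fin N → Set G) (τ : Fin N → G → G) (ρ : Fin N → G → ℝ),
    𝒢.DecompData ℓ μ N L Ks τ ρ ∧ 𝒢.CheegerGT μ N Ks τ ρ Y C ∧
    𝒢.RatioBounded N Ks τ ρ θ Y

end AlgGroupoid

/-!
Both directions compare the two boundaries through the exit sets
`Eᵢ(A) = {x ∈ A ∩ s(Kᵢ) : τᵢ x ∈ Y \ A}`. The Markov boundary of `A` is `∑ᵢ ∫_{Eᵢ(A)} √ρᵢ dμ`;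
the boundary `∂A ∩ Y` is covered by the images `τᵢ Eᵢ(A)`, of measure `∫_{Eᵢ(A)} ρᵢ dμ`, and, by
symmetry of `K`, `∂(Y \ A) ∩ Y` is covered by the sets `Eᵢ(A)` themselves. On `Y` the ratio bound
`1/θ ≤ ρᵢ ≤ θ` makes `1`, `ρᵢ` and `√ρᵢ` comparable up to a factor `√θ`, and it gives
`μ ≤ μ̃ ≤ N√θ μ` (the lower bound because `ρ = 1` on the unit bisection). Applying the hypothesis
to whichever of `A` and `Y \ A` is small for the other measure yields the constants.
-/

section RatioBounds

variable {α : Type*} [MeasurableSpace α] {μ : Measure α} {f : α → ℝ} {S : Set α} {θ : ℝ}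

lemma one_le_sqrt_mul_sqrt_of_one_div_le {t : ℝ} (hθ : 0 < θ) (ht : 1 / θ ≤ t) :
    1 ≤ √θ * √t := by
  rw [← Real.sqrt_mul hθ.le, Real.one_le_sqrt]
  rwa [div_le_iff₀' hθ] at ht

variable [IsFiniteMeasure μ]

lemma integrableOn_of_forall_norm_le {E : Type*} [NormedAddCommGroup E] {g : α → E}
    (hg : AEStronglyMeasurable g μ) (hS : MeasurableSet S) {M : ℝ} (hgS : ∀ x ∈ S, ‖g x‖ ≤ M) :
    IntegrableOn g S μ :=
  Measure.integrableOn_of_bounded (measure_ne_top μ S) hg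
    ((ae_restrict_iff' hS).2 (ae_of_all _ hgS))

lemma integrableOn_of_ratio_bound (hθ : 0 < θ) (hf : Measurable f) (hS : MeasurableSet S)
    (hfS : ∀ x ∈ S, 1 / θ ≤ f x ∧ f x ≤ θ) : IntegrableOn f S μ :=
  integrableOn_of_forall_norm_le hf.aestronglyMeasurable hS fun x hx => by
    rw [Real.norm_of_nonneg ((one_div_pos.2 hθ).le.trans (hfS x hx).1)]
    exact (hfS x hx).2

lemma integrableOn_sqrt_of_ratio_bound (hf : Measurable f) (hS : MeasurableSet S)
    (hfS : ∀ x ∈ S, 1 / θ ≤ f x ∧ f x ≤ θ) : IntegrableOn (fun x => √(f x)) S μ :=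
  integrableOn_of_forall_norm_le hf.sqrt.aestronglyMeasurable hS fun x hx => by
    rw [Real.norm_of_nonneg (Real.sqrt_nonneg _)]
    exact Real.sqrt_le_sqrt (hfS x hx).2

lemma measureReal_le_sqrt_mul_setIntegral_sqrt (hθ : 0 < θ) (hf : Measurable f)
    (hS : MeasurableSet S) (hfS : ∀ x ∈ S, 1 / θ ≤ f x ∧ f x ≤ θ) :
    μ.real S ≤ √θ * ∫ x in S, √(f x) ∂μ := by
  calc μ.real S = ∫ _ in S, (1 : ℝ) ∂μ := by simp
    _ ≤ ∫ x in S, √θ * √(f x) ∂μ :=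
      setIntegral_mono_on (integrableOn_const (measure_ne_top μ S))
        ((integrableOn_sqrt_of_ratio_bound hf hS hfS).const_mul _) hS
        fun x hx => one_le_sqrt_mul_sqrt_of_one_div_le hθ (hfS x hx).1
    _ = √θ * ∫ x in S, √(f x) ∂μ := integral_const_mul _ _

lemma setIntegral_le_sqrt_mul_setIntegral_sqrt (hθ : 0 < θ) (hf : Measurable f)
    (hS : MeasurableSet S) (hfS : ∀ x ∈ S, 1 / θ ≤ f x ∧ f x ≤ θ) :
    ∫ x in S, f x ∂μ ≤ √θ * ∫ x in S, √(f x) ∂μ := by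
  calc ∫ x in S, f x ∂μ ≤ ∫ x in S, √θ * √(f x) ∂μ :=
      setIntegral_mono_on (integrableOn_of_ratio_bound hθ hf hS hfS)
        ((integrableOn_sqrt_of_ratio_bound hf hS hfS).const_mul _) hS fun x hx => by
          have hf0 : 0 ≤ f x := (one_div_pos.2 hθ).le.trans (hfS x hx).1
          calc f x = √(f x) * √(f x) := (Real.mul_self_sqrt hf0).symm
            _ ≤ √θ * √(f x) := by gcongr; exact (hfS x hx).2
    _ = √θ * ∫ x in S, √(f x) ∂μ := integral_const_mul _ _

lemma setIntegral_sqrt_le_sqrt_mul_measureReal (hf : Measurable f) (hS : MeasurableSet S)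
    (hfS : ∀ x ∈ S, 1 / θ ≤ f x ∧ f x ≤ θ) :
    ∫ x in S, √(f x) ∂μ ≤ √θ * μ.real S := by
  calc ∫ x in S, √(f x) ∂μ ≤ ∫ _ in S, √θ ∂μ :=
      setIntegral_mono_on (integrableOn_sqrt_of_ratio_bound hf hS hfS)
        (integrableOn_const (measure_ne_top μ S)) hS
        fun x hx => Real.sqrt_le_sqrt (hfS x hx).2
    _ = √θ * μ.real S := by rw [setIntegral_const, smul_eq_mul, mul_comm]

lemma setIntegral_sqrt_le_sqrt_mul_setIntegral (hθ : 0 < θ) (hf : Measurable f)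
    (hS : MeasurableSet S) (hfS : ∀ x ∈ S, 1 / θ ≤ f x ∧ f x ≤ θ) :
    ∫ x in S, √(f x) ∂μ ≤ √θ * ∫ x in S, f x ∂μ := by
  calc ∫ x in S, √(f x) ∂μ ≤ ∫ x in S, √θ * f x ∂μ :=
      setIntegral_mono_on (integrableOn_sqrt_of_ratio_bound hf hS hfS)
        ((integrableOn_of_ratio_bound hθ hf hS hfS).const_mul _) hS fun x hx => by
          have hf0 : 0 ≤ f x := (one_div_pos.2 hθ).le.trans (hfS x hx).1
          calc √(f x) = √(f x) * 1 := (mul_one _).symm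
            _ ≤ √(f x) * (√θ * √(f x)) := by
              gcongr; exact one_le_sqrt_mul_sqrt_of_one_div_le hθ (hfS x hx).1
            _ = √θ * f x := by rw [mul_left_comm, Real.mul_self_sqrt hf0]
    _ = √θ * ∫ x in S, f x ∂μ := integral_const_mul _ _

end RatioBounds

lemma exists_eq_or_eq_sdiff_measureReal_le_half {α : Type*} [MeasurableSpace α]
    {ν ν' : Measure α} {Y A : Set α} (hA : MeasurableSet A) (hAY : A ⊆ Y) (hνY : ν Y ≠ ⊤)
    (hν'Y : ν' Y ≠ ⊤) (hA' : ν'.real A ≤ ν'.real Y / 2) :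
    ∃ X, (X = A ∨ X = Y \ A) ∧ ν.real X ≤ ν.real Y / 2 ∧ ν'.real A ≤ ν'.real X := by
  by_cases hνA : ν.real A ≤ ν.real Y / 2
  · exact ⟨A, .inl rfl, hνA, le_rfl⟩
  · refine ⟨Y \ A, .inr rfl, ?_, ?_⟩
    · rw [measureReal_sdiff hAY hA hνY]; linarith
    · rw [measureReal_sdiff hAY hA hν'Y]; linarith

namespace AlgGroupoid

variable {G : Type*} (𝒢 : AlgGroupoid G)

lemma image_s_unitSpace : 𝒢.s '' 𝒢.unitSpace = 𝒢.unitSpace := by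
  ext x
  constructor
  · rintro ⟨γ, -, rfl⟩
    exact 𝒢.s_mem γ
  · exact fun hx => ⟨x, hx, 𝒢.s_unit x hx⟩

def exitSet {N : ℕ} (Ks : Fin N → Set G) (τ : Fin N → G → G) (Y A : Set G) (i : Fin N) :
    Set G :=
  A ∩ 𝒢.s '' Ks i ∩ τ i ⁻¹' (Y \ A)

variable {𝒢} {N : ℕ} {θ : ℝ} {Ks : Fin N → Set G} {τ : Fin N → G → G} {ρ : Fin N → G → ℝ}
  {Y A : Set G}

lemma RatioBounded.on_exitSet (hR : 𝒢.RatioBounded N Ks τ ρ θ Y) (hAY : A ⊆ Y) (i : Fin N) :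
    ∀ x ∈ 𝒢.exitSet Ks τ Y A i, 1 / θ ≤ ρ i x ∧ ρ i x ≤ θ :=
  fun x ⟨⟨hxA, hxK⟩, hxτ⟩ => hR i x hxK (hAY hxA) hxτ.1

lemma sigmaY_le (hR : 𝒢.RatioBounded N Ks τ ρ θ Y) {x : G} (hx : x ∈ Y) :
    𝒢.sigmaY N Ks τ ρ Y x ≤ N * √θ := by
  calc 𝒢.sigmaY N Ks τ ρ Y x ≤ ∑ _i : Fin N, √θ := Finset.sum_le_sum fun i _ => by
        by_cases hi : x ∈ {z | z ∈ 𝒢.s '' Ks i ∧ τ i z ∈ Y}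
        · rw [indicator_of_mem hi]
          exact Real.sqrt_le_sqrt (hR i x hi.1 hx hi.2).2
        · rw [indicator_of_notMem hi]
          exact Real.sqrt_nonneg θ
    _ = N * √θ := by simp

variable [MeasurableSpace G] {ℓ : G → ℝ} {μ : Measure G} {L : ℝ}

variable (𝒢) in
noncomputable def tildeMeasure (μ : Measure G) (N : ℕ) (Ks : Fin N → Set G)
    (τ : Fin N → G → G) (ρ : Fin N → G → ℝ) (Y : Set G) : Measure G :=
  μ.withDensity fun x => ENNReal.ofReal (𝒢.sigmaY N Ks τ ρ Y x)

namespace DecompData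

lemma natCast_pos (hD : 𝒢.DecompData ℓ μ N L Ks τ ρ) : (0 : ℝ) < N := by
  obtain ⟨i, -⟩ := hD.unital
  exact_mod_cast i.pos

lemma tau_eq_self (hD : 𝒢.DecompData ℓ μ N L Ks τ ρ) {i : Fin N} (hi : Ks i = 𝒢.unitSpace)
    {x : G} (hx : x ∈ 𝒢.unitSpace) : τ i x = x := by
  simpa [𝒢.s_unit x hx, 𝒢.r_unit x hx] using hD.tau_spec i x (hi ▸ hx)

lemma measurableSet_unitSpace (hD : 𝒢.DecompData ℓ μ N L Ks τ ρ) :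
    MeasurableSet 𝒢.unitSpace := by
  obtain ⟨i, hi⟩ := hD.unital
  simpa [hi, image_s_unitSpace] using (hD.adm i).source_meas

lemma measurableSet_exitSet (hD : 𝒢.DecompData ℓ μ N L Ks τ ρ) (hY : MeasurableSet Y)
    (hA : MeasurableSet A) (i : Fin N) : MeasurableSet (𝒢.exitSet Ks τ Y A i) :=
  (hA.inter (hD.adm i).source_meas).inter (hD.tau_meas i (hY.diff hA))

lemma measureReal_image_eq (hD : 𝒢.DecompData ℓ μ N L Ks τ ρ) (i : Fin N) {S : Set G}
    (hS : MeasurableSet S) (hSK : S ⊆ 𝒢.s '' Ks i) :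
    μ.real (τ i '' S) = ∫ x in S, ρ i x ∂μ := by
  rw [measureReal_def, hD.rho_spec i S hS hSK, integral_eq_lintegral_of_nonneg_ae
    (ae_of_all _ (hD.rho_nonneg i)) (hD.rho_meas i).aestronglyMeasurable]

lemma ae_rho_eq_one [IsFiniteMeasure μ] (hD : 𝒢.DecompData ℓ μ N L Ks τ ρ) {i : Fin N}
    (hi : Ks i = 𝒢.unitSpace) : ∀ᵐ x ∂μ, x ∈ 𝒢.unitSpace → ρ i x = 1 := by
  have hU := hD.measurableSet_unitSpace
  rw [← ae_restrict_iff' hU]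
  have h : (fun x => ENNReal.ofReal (ρ i x)) =ᵐ[μ.restrict 𝒢.unitSpace] fun _ => 1 := by
    refine ae_eq_of_forall_setLIntegral_eq_of_sigmaFinite (hD.rho_meas i).ennreal_ofReal
      measurable_const fun s hs _ => ?_
    have hsU : s ∩ 𝒢.unitSpace ⊆ 𝒢.s '' Ks i := by
      rw [hi, image_s_unitSpace]
      exact inter_subset_right
    have hτ : τ i '' (s ∩ 𝒢.unitSpace) = s ∩ 𝒢.unitSpace := by
      rw [image_congr fun x hx => hD.tau_eq_self hi hx.2, image_id']
    rw [Measure.restrict_restrict hs, ← hD.rho_spec i _ (hs.inter hU) hsU, hτ,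
      setLIntegral_one]
  filter_upwards [h] with x hx
  exact ENNReal.ofReal_eq_one.1 hx

end DecompData

lemma markovBoundary_eq_sum [IsFiniteMeasure μ] (hD : 𝒢.DecompData ℓ μ N L Ks τ ρ)
    (hR : 𝒢.RatioBounded N Ks τ ρ θ Y) (hY : MeasurableSet Y) (hA : MeasurableSet A)
    (hAY : A ⊆ Y) :
    𝒢.markovBoundary μ N Ks τ ρ Y A = ∑ i, ∫ x in 𝒢.exitSet Ks τ Y A i, √(ρ i x) ∂μ := by
  have hM : ∀ i, MeasurableSet {z | z ∈ 𝒢.s '' Ks i ∧ τ i z ∈ Y \ A} := fun i =>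
    (hD.adm i).source_meas.inter (hD.tau_meas i (hY.diff hA))
  rw [markovBoundary, integral_finsetSum]
  · refine Finset.sum_congr rfl fun i _ => ?_
    rw [setIntegral_indicator (hM i), exitSet, inter_assoc]
    rfl
  · intro i _
    rw [integrable_indicator_iff (hM i), IntegrableOn,
      Measure.restrict_restrict (hM i)]
    exact (integrableOn_sqrt_of_ratio_bound (hD.rho_meas i) (hD.measurableSet_exitSet hY hA i)
      (hR.on_exitSet hAY i)).mono_set fun x ⟨⟨hxK, hxτ⟩, hxA⟩ => ⟨⟨hxA, hxK⟩, hxτ⟩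

lemma measureReal_le_sqrt_mul_markovBoundary [IsFiniteMeasure μ]
    (hD : 𝒢.DecompData ℓ μ N L Ks τ ρ) (hR : 𝒢.RatioBounded N Ks τ ρ θ Y)
    (hY : MeasurableSet Y) (hA : MeasurableSet A) (hAY : A ⊆ Y) {W : Set G}
    {T : Fin N → Set G} (hWT : W ⊆ ⋃ i, T i)
    (hT : ∀ i, μ.real (T i) ≤ √θ * ∫ x in 𝒢.exitSet Ks τ Y A i, √(ρ i x) ∂μ) :
    μ.real W ≤ √θ * 𝒢.markovBoundary μ N Ks τ ρ Y A := by
  rw [markovBoundary_eq_sum hD hR hY hA hAY, Finset.mul_sum]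
  calc μ.real W ≤ μ.real (⋃ i, T i) := measureReal_mono hWT
    _ ≤ ∑ i, μ.real (T i) := measureReal_iUnion_fintype_le T
    _ ≤ _ := Finset.sum_le_sum fun i _ => hT i

lemma markovBoundary_le_mul_measureReal [IsFiniteMeasure μ]
    (hD : 𝒢.DecompData ℓ μ N L Ks τ ρ) (hR : 𝒢.RatioBounded N Ks τ ρ θ Y)
    (hY : MeasurableSet Y) (hA : MeasurableSet A) (hAY : A ⊆ Y) {W : Set G}
    {T : Fin N → Set G} (hTW : ∀ i, T i ⊆ W)
    (hT : ∀ i, ∫ x in 𝒢.exitSet Ks τ Y A i, √(ρ i x) ∂μ ≤ √θ * μ.real (T i)) :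
    𝒢.markovBoundary μ N Ks τ ρ Y A ≤ N * √θ * μ.real W := by
  rw [markovBoundary_eq_sum hD hR hY hA hAY]
  calc ∑ i, ∫ x in 𝒢.exitSet Ks τ Y A i, √(ρ i x) ∂μ ≤ ∑ _i : Fin N, √θ * μ.real W :=
      Finset.sum_le_sum fun i _ => (hT i).trans <|
        mul_le_mul_of_nonneg_left (measureReal_mono (hTW i)) (Real.sqrt_nonneg θ)
    _ = N * √θ * μ.real W := by simp [mul_assoc]

lemma boundary_subset_iUnion_image_exitSet (hD : 𝒢.DecompData ℓ μ N L Ks τ ρ) :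
    (𝒢.rMul (⋃ i, Ks i) A \ A) ∩ Y ⊆ ⋃ i, τ i '' 𝒢.exitSet Ks τ Y A i := by
  rintro _ ⟨⟨⟨γ, ⟨hγK, hγA⟩, rfl⟩, hγA'⟩, hγY⟩
  obtain ⟨i, hi⟩ := mem_iUnion.1 hγK
  have hτ := hD.tau_spec i γ hi
  exact mem_iUnion.2
    ⟨i, 𝒢.s γ, ⟨⟨hγA, γ, hi, rfl⟩, by rw [mem_preimage, hτ]; exact ⟨hγY, hγA'⟩⟩, hτ⟩

lemma image_exitSet_subset_boundary (hD : 𝒢.DecompData ℓ μ N L Ks τ ρ) (i : Fin N) :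
    τ i '' 𝒢.exitSet Ks τ Y A i ⊆ (𝒢.rMul (⋃ j, Ks j) A \ A) ∩ Y := by
  rintro _ ⟨_, ⟨⟨hxA, γ, hγ, rfl⟩, hxτ⟩, rfl⟩
  rw [mem_preimage, hD.tau_spec i γ hγ] at hxτ
  rw [hD.tau_spec i γ hγ]
  exact ⟨⟨⟨γ, ⟨mem_iUnion.2 ⟨i, hγ⟩, hxA⟩, rfl⟩, hxτ.2⟩, hxτ.1⟩

-- A point of `Y \ A` reached from `A` is sent back into `A` by the inverse bisection.
lemma compl_boundary_subset_iUnion_exitSet (hD : 𝒢.DecompData ℓ μ N L Ks τ ρ) :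
    (𝒢.rMul (⋃ i, Ks i) (Y \ A) \ (Y \ A)) ∩ Y ⊆ ⋃ i, 𝒢.exitSet Ks τ Y A i := by
  rintro _ ⟨⟨⟨γ, ⟨hγK, hγB⟩, rfl⟩, hγB'⟩, hγY⟩
  obtain ⟨i, hi⟩ := mem_iUnion.1 hγK
  obtain ⟨σ, hσ⟩ := hD.symm
  have hinv : 𝒢.inv γ ∈ Ks (σ i) := hσ i ▸ ⟨γ, hi, rfl⟩
  have hτ := hD.tau_spec (σ i) _ hinv
  rw [𝒢.s_inv, 𝒢.r_inv] at hτ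
  have hγA : 𝒢.r γ ∈ A := by_contra fun h => hγB' ⟨hγY, h⟩
  exact mem_iUnion.2 ⟨σ i, ⟨hγA, 𝒢.inv γ, hinv, 𝒢.s_inv γ⟩, by rw [mem_preimage, hτ]; exact hγB⟩

lemma exitSet_compl_subset_boundary (hD : 𝒢.DecompData ℓ μ N L Ks τ ρ) (hAY : A ⊆ Y)
    (i : Fin N) : 𝒢.exitSet Ks τ Y (Y \ A) i ⊆ (𝒢.rMul (⋃ j, Ks j) A \ A) ∩ Y := by
  rintro _ ⟨⟨hxB, γ, hγ, rfl⟩, hxτ⟩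
  rw [mem_preimage, hD.tau_spec i γ hγ, sdiff_sdiff_cancel_left hAY] at hxτ
  obtain ⟨σ, hσ⟩ := hD.symm
  have hinv : 𝒢.inv γ ∈ Ks (σ i) := hσ i ▸ ⟨γ, hγ, rfl⟩
  refine ⟨⟨⟨𝒢.inv γ, ⟨mem_iUnion.2 ⟨σ i, hinv⟩, ?_⟩, 𝒢.r_inv γ⟩, hxB.2⟩, hxB.1⟩
  rw [𝒢.s_inv]
  exact hxτ

lemma measureReal_boundary_le [IsFiniteMeasure μ] (hD : 𝒢.DecompData ℓ μ N L Ks τ ρ)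
    (hR : 𝒢.RatioBounded N Ks τ ρ θ Y) (hθ : 0 < θ) (hY : MeasurableSet Y)
    (hA : MeasurableSet A) (hAY : A ⊆ Y) {X : Set G} (hX : X = A ∨ X = Y \ A) :
    μ.real ((𝒢.rMul (⋃ i, Ks i) X \ X) ∩ Y) ≤ √θ * 𝒢.markovBoundary μ N Ks τ ρ Y A := by
  have hE := hD.measurableSet_exitSet hY hA
  rcases hX with rfl | rfl
  · refine measureReal_le_sqrt_mul_markovBoundary hD hR hY hA hAY
      (boundary_subset_iUnion_image_exitSet hD) fun i => ?_
    rw [hD.measureReal_image_eq i (hE i) fun x hx => hx.1.2]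
    exact setIntegral_le_sqrt_mul_setIntegral_sqrt hθ (hD.rho_meas i) (hE i)
      (hR.on_exitSet hAY i)
  · exact measureReal_le_sqrt_mul_markovBoundary hD hR hY hA hAY
      (compl_boundary_subset_iUnion_exitSet hD) fun i =>
        measureReal_le_sqrt_mul_setIntegral_sqrt hθ (hD.rho_meas i) (hE i) (hR.on_exitSet hAY i)

lemma markovBoundary_le [IsFiniteMeasure μ] (hD : 𝒢.DecompData ℓ μ N L Ks τ ρ)
    (hR : 𝒢.RatioBounded N Ks τ ρ θ Y) (hθ : 0 < θ) (hY : MeasurableSet Y)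
    (hA : MeasurableSet A) (hAY : A ⊆ Y) {X : Set G} (hX : X = A ∨ X = Y \ A) :
    𝒢.markovBoundary μ N Ks τ ρ Y X ≤ N * √θ * μ.real ((𝒢.rMul (⋃ i, Ks i) A \ A) ∩ Y) := by
  rcases hX with rfl | rfl
  · have hE := hD.measurableSet_exitSet hY hA
    refine markovBoundary_le_mul_measureReal hD hR hY hA hAY
      (image_exitSet_subset_boundary hD) fun i => ?_
    rw [hD.measureReal_image_eq i (hE i) fun x hx => hx.1.2]
    exact setIntegral_sqrt_le_sqrt_mul_setIntegral hθ (hD.rho_meas i) (hE i)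
      (hR.on_exitSet hAY i)
  · have hE := hD.measurableSet_exitSet hY (hY.diff hA)
    exact markovBoundary_le_mul_measureReal hD hR hY (hY.diff hA) sdiff_subset
      (exitSet_compl_subset_boundary hD hAY) fun i =>
        setIntegral_sqrt_le_sqrt_mul_measureReal (hD.rho_meas i) (hE i)
          (hR.on_exitSet sdiff_subset i)

lemma tildeMu_eq_tildeMeasure [SFinite μ] (S : Set G) :
    𝒢.tildeMu μ N Ks τ ρ Y S = 𝒢.tildeMeasure μ N Ks τ ρ Y S :=
  (withDensity_apply' _ _).symm

lemma tildeMeasure_le [SFinite μ] (hR : 𝒢.RatioBounded N Ks τ ρ θ Y) {S : Set G}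
    (hSY : S ⊆ Y) :
    𝒢.tildeMeasure μ N Ks τ ρ Y S ≤ ENNReal.ofReal (N * √θ) * μ S := by
  rw [tildeMeasure, withDensity_apply', ← setLIntegral_const]
  exact setLIntegral_mono_ae aemeasurable_const
    (ae_of_all _ fun x hx => ENNReal.ofReal_le_ofReal (sigmaY_le hR (hSY hx)))

lemma tildeMeasure_ne_top [IsFiniteMeasure μ] (hR : 𝒢.RatioBounded N Ks τ ρ θ Y) {S : Set G}
    (hSY : S ⊆ Y) : 𝒢.tildeMeasure μ N Ks τ ρ Y S ≠ ⊤ :=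
  ne_top_of_le_ne_top (ENNReal.mul_ne_top ENNReal.ofReal_ne_top (measure_ne_top μ S))
    (tildeMeasure_le hR hSY)

lemma tildeMeasure_real_le [IsFiniteMeasure μ] (hR : 𝒢.RatioBounded N Ks τ ρ θ Y)
    {S : Set G} (hSY : S ⊆ Y) :
    (𝒢.tildeMeasure μ N Ks τ ρ Y).real S ≤ N * √θ * μ.real S := by
  have h := ENNReal.toReal_mono (ENNReal.mul_ne_top ENNReal.ofReal_ne_top (measure_ne_top μ S))
    (tildeMeasure_le hR hSY)
  rwa [ENNReal.toReal_mul, ENNReal.toReal_ofReal (by positivity)] at h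

lemma DecompData.ae_one_le_sigmaY [IsFiniteMeasure μ] (hD : 𝒢.DecompData ℓ μ N L Ks τ ρ)
    (hYsub : Y ⊆ 𝒢.unitSpace) : ∀ᵐ x ∂μ, x ∈ Y → 1 ≤ 𝒢.sigmaY N Ks τ ρ Y x := by
  obtain ⟨i, hi⟩ := hD.unital
  filter_upwards [hD.ae_rho_eq_one hi] with x hρ hxY
  have hxU := hYsub hxY
  have hx : x ∈ {z | z ∈ 𝒢.s '' Ks i ∧ τ i z ∈ Y} :=
    ⟨by rwa [hi, image_s_unitSpace], by rwa [hD.tau_eq_self hi hxU]⟩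
  calc (1 : ℝ) = {z | z ∈ 𝒢.s '' Ks i ∧ τ i z ∈ Y}.indicator (fun z => √(ρ i z)) x := by
        rw [indicator_of_mem hx, hρ hxU, Real.sqrt_one]
    _ ≤ 𝒢.sigmaY N Ks τ ρ Y x :=
        Finset.single_le_sum (f := fun i => {z | z ∈ 𝒢.s '' Ks i ∧ τ i z ∈ Y}.indicator
          (fun z => √(ρ i z)) x)
          (fun i _ => indicator_nonneg (fun _ _ => Real.sqrt_nonneg _) x) (Finset.mem_univ i)

lemma le_tildeMeasure [IsFiniteMeasure μ] (hD : 𝒢.DecompData ℓ μ N L Ks τ ρ)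
    (hYsub : Y ⊆ 𝒢.unitSpace) {S : Set G} (hS : MeasurableSet S) (hSY : S ⊆ Y) :
    μ S ≤ 𝒢.tildeMeasure μ N Ks τ ρ Y S := by
  rw [tildeMeasure, withDensity_apply', ← setLIntegral_one]
  refine lintegral_mono_ae ((ae_restrict_iff' hS).2 ?_)
  filter_upwards [hD.ae_one_le_sigmaY hYsub] with x hx hxS
  exact ENNReal.one_le_ofReal.2 (hx (hSY hxS))

lemma cheegerGT_of_expandsOn [IsFiniteMeasure μ] (hD : 𝒢.DecompData ℓ μ N L Ks τ ρ)
    (hR : 𝒢.RatioBounded N Ks τ ρ θ Y) (hθ : 0 < θ) (hY : MeasurableSet Y) {C : ℝ}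
    (hC : 0 < C) (hExp : 𝒢.ExpandsOn μ C (⋃ i, Ks i) Y) :
    𝒢.CheegerGT μ N Ks τ ρ Y (C / (N * θ)) := by
  intro A hA hAY hpos hhalf
  simp only [tildeMu_eq_tildeMeasure] at hpos hhalf ⊢
  set ν := 𝒢.tildeMeasure μ N Ks τ ρ Y
  obtain ⟨X, hX, hXhalf, hAX⟩ := exists_eq_or_eq_sdiff_measureReal_le_half hA hAY
    (measure_ne_top μ Y) (tildeMeasure_ne_top hR subset_rfl) hhalf
  have hXY : X ⊆ Y := by rcases hX with rfl | rfl <;> [exact hAY; exact sdiff_subset]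
  have hXm : MeasurableSet X := by rcases hX with rfl | rfl <;> [exact hA; exact hY.diff hA]
  have hN := hD.natCast_pos
  have hsθ : 0 < √θ := Real.sqrt_pos.2 hθ
  have hνX : ν.real A ≤ N * √θ * μ.real X := hAX.trans (tildeMeasure_real_le hR hXY)
  have hμX : 0 < μ.real X := pos_of_mul_pos_right
    ((ENNReal.toReal_pos hpos.ne' (tildeMeasure_ne_top hR hAY)).trans_le hνX) (by positivity)
  have hexp : C * μ.real X < √θ * 𝒢.markovBoundary μ N Ks τ ρ Y A :=
    (hExp X hXm hXY hμX hXhalf).trans_le (measureReal_boundary_le hD hR hθ hY hA hAY hX)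
  calc C / (N * θ) * ν.real A ≤ C / (N * θ) * (N * √θ * μ.real X) := by gcongr
    _ = C * μ.real X / √θ := by
      field_simp
      rw [Real.sq_sqrt hθ.le]
    _ < 𝒢.markovBoundary μ N Ks τ ρ Y A := by rwa [div_lt_iff₀ hsθ, mul_comm _ √θ]

lemma expandsOn_of_cheegerGT [IsFiniteMeasure μ] (hD : 𝒢.DecompData ℓ μ N L Ks τ ρ)
    (hR : 𝒢.RatioBounded N Ks τ ρ θ Y) (hθ : 0 < θ) (hY : MeasurableSet Y)
    (hYsub : Y ⊆ 𝒢.unitSpace) {κ : ℝ} (hκ : 0 < κ) (hCh : 𝒢.CheegerGT μ N Ks τ ρ Y κ) :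
    𝒢.ExpandsOn μ (κ / (N * √θ + κ)) (⋃ i, Ks i) Y := by
  intro A hA hAY hpos hhalf
  set ν := 𝒢.tildeMeasure μ N Ks τ ρ Y
  obtain ⟨X, hX, hXhalf, hAX⟩ := exists_eq_or_eq_sdiff_measureReal_le_half (ν := ν) (ν' := μ)
    hA hAY (tildeMeasure_ne_top hR subset_rfl) (measure_ne_top μ Y) hhalf
  have hXY : X ⊆ Y := by rcases hX with rfl | rfl <;> [exact hAY; exact sdiff_subset]
  have hXm : MeasurableSet X := by rcases hX with rfl | rfl <;> [exact hA; exact hY.diff hA]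
  have hμν : μ.real X ≤ ν.real X :=
    ENNReal.toReal_mono (tildeMeasure_ne_top hR hXY) (le_tildeMeasure hD hYsub hXm hXY)
  have hνX : 0 < ν X := ENNReal.toReal_pos_iff.1 (hpos.trans_le (hAX.trans hμν)) |>.1
  have hcheeger : κ * ν.real X < 𝒢.markovBoundary μ N Ks τ ρ Y X := by
    have h := hCh X hXm hXY
    simp only [tildeMu_eq_tildeMeasure] at h
    exact h hνX hXhalf
  have hkey : κ * μ.real A < N * √θ * μ.real ((𝒢.rMul (⋃ i, Ks i) A \ A) ∩ Y) :=
    calc κ * μ.real A ≤ κ * ν.real X := by gcongr; exact hAX.trans hμν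
      _ < 𝒢.markovBoundary μ N Ks τ ρ Y X := hcheeger
      _ ≤ _ := markovBoundary_le hD hR hθ hY hA hAY hX
  have hbdry : 0 ≤ μ.real ((𝒢.rMul (⋃ i, Ks i) A \ A) ∩ Y) := measureReal_nonneg
  rw [← measureReal_def, ← measureReal_def, div_mul_eq_mul_div, div_lt_iff₀ (by positivity)]
  nlinarith

end AlgGroupoid

open MeasureTheory in
theorem stmt11_general {G : Type*} [MeasurableSpace G] (𝒢 : AlgGroupoid G) (ℓ : G → ℝ)
    (μ : Measure G) [IsProbabilityMeasure μ]
    (Y : Set G) (hY : MeasurableSet Y) (hYsub : Y ⊆ 𝒢.unitSpace)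
    (N : ℕ) (L θ : ℝ) (hθ : 1 ≤ θ) (C kap : ℝ) (hC : 0 < C) (hkap : 0 < kap) :
    (𝒢.IsDomainExpRatio ℓ μ C N L θ Y →
      𝒢.IsDomainMarkovExp ℓ μ (C / (N * θ)) N L Y) ∧
    (𝒢.IsDomainMarkovExpRatio ℓ μ kap N L θ Y →
      𝒢.IsDomainExp ℓ μ (kap / (N * Real.sqrt θ + kap)) N L Y) := by
  have hθ₀ : 0 < θ := one_pos.trans_le hθ
  constructor
  · rintro ⟨Ks, τ, ρ, hD, hExp, hR⟩
    exact ⟨Ks, τ, ρ, hD, AlgGroupoid.cheegerGT_of_expandsOn hD hR hθ₀ hY hC hExp⟩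
  · rintro ⟨Ks, τ, ρ, hD, hCh, hR⟩
    exact ⟨Ks, τ, ρ, hD, AlgGroupoid.expandsOn_of_cheegerGT hD hR hθ₀ hY hYsub hkap hCh⟩

open MeasureTheory in
/-- (a) a domain of `(C,N,L)`-expansion with ratio bounded by `θ` is a
domain of Markov `(C/(Nθ),N,L)`-expansion; (b) a domain of Markov
`(κ,N,L)`-expansion with ratio bounded by `θ` is a domain of
`(κ/(N√θ+κ),N,L)`-expansion. -/
theorem stmt11 {G : Type*} [MeasurableSpace G] (𝒢 : AlgGroupoid G) (ℓ : G → ℝ)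
    (hℓ : 𝒢.IsLength ℓ) (μ : Measure G) [IsProbabilityMeasure μ]
    (Y : Set G) (hY : MeasurableSet Y) (hYsub : Y ⊆ 𝒢.unitSpace)
    (N : ℕ) (L θ : ℝ) (hθ : 1 ≤ θ) (C kap : ℝ) (hC : 0 < C) (hkap : 0 < kap) :
    (𝒢.IsDomainExpRatio ℓ μ C N L θ Y →
      𝒢.IsDomainMarkovExp ℓ μ (C / (N * θ)) N L Y) ∧
    (𝒢.IsDomainMarkovExpRatio ℓ μ kap N L θ Y →
      𝒢.IsDomainExp ℓ μ (kap / (N * Real.sqrt θ + kap)) N L Y) :=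
  stmt11_general 𝒢 ℓ μ Y hY hYsub N L θ hθ C kap hC hkap
end

section
/- Let G be the graph with vertex set ℕ and edge set {(n, n+1) : n ∈ ℕ}, 𝒢 its graph groupoid with length function ℓ(x,k,y) = 2N(x,k,y) + k, and μ the Borel probability measure on P(G) with μ(Z(n)) = 2^{−(n+1)}. Then 𝒢 is expanding in measure: there is C > 0 (e.g. C = 1/2) and a decomposable K (e.g. the unit ball B₁) such that μ(r(K·A)) ≥ (1+C)·μ(A) for all measurable A ⊆ P(G) with 0 < μ(A) ≤ 1/2. -/
open MeasureTheory Set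

/-- The ambient groupoid of triples `(x,k,y)` of paths with a lag `k ∈ ℤ`:
`(x,k,y)(y,l,z) = (x,k+l,z)`, `(x,k,y)⁻¹ = (y,−k,x)`; the graph groupoid is the
subset of shift-equivalent triples. -/
def pathGroupoid (P : Type*) : AlgGroupoid (P × ℤ × P) where
  unitSpace := {p | p.2.1 = 0 ∧ p.2.2 = p.1}
  s := fun p => (p.2.2, 0, p.2.2)
  r := fun p => (p.1, 0, p.1)
  mul := fun p q => (p.1, p.2.1 + q.2.1, q.2.2)
  inv := fun p => (p.2.2, -p.2.1, p.1)
  s_mem := fun _ => ⟨rfl, rfl⟩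
  r_mem := fun _ => ⟨rfl, rfl⟩
  s_unit := by rintro ⟨x, k, y⟩ ⟨h1, h2⟩; simp_all
  r_unit := by rintro ⟨x, k, y⟩ ⟨h1, h2⟩; simp_all
  s_mul := by rintro ⟨x, k, y⟩ ⟨x', k', y'⟩ _; rfl
  r_mul := by rintro ⟨x, k, y⟩ ⟨x', k', y'⟩ _; rfl
  mul_assoc' := by rintro ⟨x, k, y⟩ ⟨x', k', y'⟩ ⟨x'', k'', y''⟩ _ _; simp [add_assoc]
  unit_mul := by rintro ⟨x, k, y⟩; simp
  mul_unit := by rintro ⟨x, k, y⟩; simp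
  s_inv := by rintro ⟨x, k, y⟩; rfl
  r_inv := by rintro ⟨x, k, y⟩; rfl
  mul_inv := by rintro ⟨x, k, y⟩; simp
  inv_mul := by rintro ⟨x, k, y⟩; simp

/-- An infinite path in the linear graph on `ℕ` (with edges `n → n+1`), recorded as
its sequence of edges, edge `n` being the edge from `n` to `n+1`. -/
def LinPath : Type := {f : ℕ → ℕ // ∀ i, f (i + 1) = f i + 1}

instance : MeasurableSpace LinPath := ⊤

/-- The unique infinite path starting at the vertex `n`. -/
def pathFrom (n : ℕ) : LinPath := ⟨fun i => n + i, fun _ => rfl⟩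

/-- The set of `N ∈ ℕ` witnessing that `x` and `y` are shift-equivalent with
lag `k` from index `N` on. -/
def SEset (p : LinPath × ℤ × LinPath) : Set ℕ :=
  {N | ∀ i : ℕ, N ≤ i → 0 ≤ (i : ℤ) + p.2.1 ∧
    p.1.val i = p.2.2.val ((i : ℤ) + p.2.1).toNat}

/-- Shift equivalence of `x` and `y` with lag `k`. -/
def SE (p : LinPath × ℤ × LinPath) : Prop := (SEset p).Nonempty

/-- The length function `ℓ(x,k,y) = 2·N(x,k,y) + k` on the graph groupoid. -/
noncomputable def linLen (p : LinPath × ℤ × LinPath) : ℝ :=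
  2 * ((sInf (SEset p) : ℕ) : ℝ) + (p.2.1 : ℝ)

namespace Stmt18Aux

open MeasureTheory Set

lemma path_val (x : LinPath) (i : ℕ) : x.val i = x.val 0 + i := by
  induction i with
  | zero => simp
  | succ n ih => rw [x.property n, ih]; ring

lemma path_eq (x : LinPath) : x = pathFrom (x.val 0) := by
  apply Subtype.ext; funext i; exact path_val x i

lemma pathFrom_val (n i : ℕ) : (pathFrom n).val i = n + i := rfl

lemma pathFrom_injective : Function.Injective pathFrom := by
  intro a b h
  have := congrArg (fun x : LinPath => x.val 0) h
  simpa [pathFrom] using this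

instance : Countable LinPath :=
  ⟨fun x => x.val 0, fun a b h => by
    simp only at h; rw [path_eq a, path_eq b, h]⟩

instance : MeasurableSingletonClass LinPath := ⟨fun _ => trivial⟩

lemma measP_all (A : Set LinPath) : MeasurableSet A := trivial

lemma meas_all (A : Set (LinPath × ℤ × LinPath)) : MeasurableSet A :=
  (Set.to_countable A).measurableSet

/-- the diagonal embedding -/
def diag : LinPath → LinPath × ℤ × LinPath := fun x => (x, 0, x)

section Meas
variable (μP : Measure LinPath) [IsProbabilityMeasure μP]
  (hμ : ∀ n : ℕ, μP {pathFrom n} = (2 : ENNReal)⁻¹ ^ (n + 1))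

include hμ

lemma pos_of_nonempty {S : Set LinPath} (hS : S.Nonempty) : 0 < μP S := by
  obtain ⟨x, hx⟩ := hS
  have h1 : μP {x} ≤ μP S := measure_mono (by simpa using hx)
  have h2 : μP {x} = (2 : ENNReal)⁻¹ ^ (x.val 0 + 1) := by
    rw [path_eq x]; exact hμ _
  have : (0 : ENNReal) < (2 : ENNReal)⁻¹ ^ (x.val 0 + 1) :=
    ENNReal.pow_pos (ENNReal.inv_pos.2 ENNReal.ofNat_ne_top) _
  calc (0:ENNReal) < μP {x} := h2 ▸ this
    _ ≤ μP S := h1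

lemma measure_image (J : Set ℕ) :
    μP (pathFrom '' J) = ∑' n : J, (2 : ENNReal)⁻¹ ^ ((n : ℕ) + 1) := by
  have h : pathFrom '' J = ⋃ n ∈ J, {pathFrom n} := by
    ext x; simp [Set.image, eq_comm]
  rw [h, measure_biUnion (Set.to_countable J) ?_ (fun b _ => measP_all {pathFrom b})]
  · exact tsum_congr fun n => hμ n
  · intro a _ b _ hab
    simp only [Function.onFun, Set.disjoint_singleton]
    exact fun h => hab (pathFrom_injective h)

lemma measure_shift {I : Set ℕ} (hI : ∀ n ∈ I, 1 ≤ n) :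
    μP (pathFrom '' (Nat.pred '' I)) = 2 * μP (pathFrom '' I) := by
  rw [measure_image μP hμ, measure_image μP hμ,
    tsum_image (fun n : ℕ => (2 : ENNReal)⁻¹ ^ (n + 1))
      (fun a ha b hb h =>
        Nat.pred_inj (hI a ha) (hI b hb) h)]
  rw [← ENNReal.tsum_mul_left]
  apply tsum_congr
  rintro ⟨n, hn⟩
  have h1 : 1 ≤ n := hI n hn
  have h2 : Nat.pred n + 1 = n := Nat.succ_pred_eq_of_pos h1
  rw [h2, pow_succ, mul_comm ((2 : ENNReal)⁻¹ ^ n) _, ← mul_assoc,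
    ENNReal.mul_inv_cancel two_ne_zero ENNReal.ofNat_ne_top, one_mul]

end Meas

end Stmt18Aux

namespace Stmt18Aux
open MeasureTheory Set

lemma mem_SEset_unit (x : LinPath) : 0 ∈ SEset (x, 0, x) := by
  intro i _
  refine ⟨show (0:ℤ) ≤ (i:ℤ) + 0 by omega, ?_⟩
  show x.val i = x.val ((i : ℤ) + 0).toNat
  norm_num

lemma linLen_unit (x : LinPath) : linLen (x, 0, x) = 0 := by
  unfold linLen
  rw [Nat.sInf_eq_zero.mpr (Or.inl (mem_SEset_unit x))]
  simp

lemma mem_SEset_K0 (m : ℕ) : 1 ∈ SEset (pathFrom m, -1, pathFrom (m + 1)) := by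
  intro i hi
  refine ⟨show (0:ℤ) ≤ (i:ℤ) + (-1) by omega, ?_⟩
  show m + i = (m + 1) + ((i : ℤ) + (-1)).toNat
  omega

lemma zero_notmem_SEset_K0 (m : ℕ) : 0 ∉ SEset (pathFrom m, -1, pathFrom (m + 1)) := by
  intro h
  have h2 : (0:ℤ) ≤ ((0:ℕ):ℤ) + (-1) := (h 0 le_rfl).1
  omega

lemma linLen_K0 (m : ℕ) : linLen (pathFrom m, -1, pathFrom (m + 1)) = 1 := by
  unfold linLen
  have h1 : sInf (SEset (pathFrom m, -1, pathFrom (m + 1))) = 1 := by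
    have hle := Nat.sInf_le (mem_SEset_K0 m)
    have hmem := Nat.sInf_mem ⟨1, mem_SEset_K0 m⟩
    have h0 := zero_notmem_SEset_K0 m
    rcases Nat.lt_or_ge (sInf (SEset (pathFrom m, -1, pathFrom (m + 1)))) 1 with h | h
    · interval_cases h' : sInf (SEset (pathFrom m, -1, pathFrom (m + 1)))
      · exact absurd (h' ▸ hmem) h0
    · omega
  rw [h1]
  norm_num

lemma mem_SEset_K1 : 0 ∈ SEset (pathFrom 1, 1, pathFrom 0) := by
  intro i _
  refine ⟨show (0:ℤ) ≤ (i:ℤ) + 1 by omega, ?_⟩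
  show 1 + i = 0 + ((i : ℤ) + 1).toNat
  omega

lemma linLen_K1 : linLen (pathFrom 1, 1, pathFrom 0) = 1 := by
  unfold linLen
  rw [Nat.sInf_eq_zero.mpr (Or.inl mem_SEset_K1)]
  norm_num

end Stmt18Aux

namespace Stmt18Aux
open MeasureTheory Set

lemma mem_unit_iff (γ : LinPath × ℤ × LinPath) :
    γ ∈ (pathGroupoid LinPath).unitSpace ↔ ∃ x, γ = (x, 0, x) := by
  constructor
  · rintro ⟨h1, h2⟩
    refine ⟨γ.1, ?_⟩
    obtain ⟨a, b, c⟩ := γ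
    simp_all
  · rintro ⟨x, rfl⟩; exact ⟨rfl, rfl⟩

def K0 : Set (LinPath × ℤ × LinPath) :=
  {γ | ∃ m : ℕ, γ = (pathFrom m, -1, pathFrom (m + 1))}

def K1 : Set (LinPath × ℤ × LinPath) := {(pathFrom 1, 1, pathFrom 0)}

def Kfull : Set (LinPath × ℤ × LinPath) :=
  (pathGroupoid LinPath).unitSpace ∪ K0 ∪ K1

section Meas
variable (μP : Measure LinPath) [IsProbabilityMeasure μP]
  (hμ : ∀ n : ℕ, μP {pathFrom n} = (2 : ENNReal)⁻¹ ^ (n + 1))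

lemma mu'_apply (B : Set (LinPath × ℤ × LinPath)) :
    Measure.map diag μP B = μP (diag ⁻¹' B) :=
  Measure.map_apply measurable_from_top (meas_all B)

lemma mu'_ne_top (B : Set (LinPath × ℤ × LinPath)) :
    Measure.map diag μP B ≠ ⊤ := by
  rw [mu'_apply]
  exact (lt_of_le_of_lt (measure_mono (Set.subset_univ _)) (by simp)).ne

include hμ

lemma mu'_zero_iff (B : Set (LinPath × ℤ × LinPath)) :
    Measure.map diag μP B = 0 ↔ ∀ x : LinPath, diag x ∉ B := by
  rw [mu'_apply]
  constructor
  · intro h x hx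
    have := pos_of_nonempty μP hμ ⟨x, Set.mem_preimage.mpr hx⟩
    rw [h] at this
    exact lt_irrefl _ this
  · intro h
    have : diag ⁻¹' B = ∅ := Set.eq_empty_iff_forall_notMem.2 h
    rw [this, measure_empty]

lemma admissible_unit :
    (pathGroupoid LinPath).IsAdmissible linLen (Measure.map diag μP)
      (pathGroupoid LinPath).unitSpace := by
  have himg : (pathGroupoid LinPath).s '' (pathGroupoid LinPath).unitSpace
      = (pathGroupoid LinPath).unitSpace := by
    ext γ
    constructor
    · rintro ⟨γ', hu, rfl⟩
      obtain ⟨x, rfl⟩ := (mem_unit_iff _).1 hu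
      exact ⟨rfl, rfl⟩
    · intro hγ
      obtain ⟨x, rfl⟩ := (mem_unit_iff _).1 hγ
      exact ⟨(x, 0, x), hγ, rfl⟩
  have hrMul : ∀ A ⊆ (pathGroupoid LinPath).unitSpace,
      (pathGroupoid LinPath).rMul (pathGroupoid LinPath).unitSpace A = A := by
    intro A hA
    ext γ
    constructor
    · rintro ⟨γ', ⟨hu, hs⟩, rfl⟩
      obtain ⟨x, rfl⟩ := (mem_unit_iff _).1 hu
      exact hs
    · intro hγ
      obtain ⟨x, rfl⟩ := (mem_unit_iff _).1 (hA hγ)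
      exact ⟨(x, 0, x), ⟨⟨rfl, rfl⟩, hγ⟩, rfl⟩
  refine ⟨⟨?_, ?_⟩, meas_all _, meas_all _, fun A _ _ => meas_all _,
    fun B _ _ => meas_all _, ?_, ⟨1, ?_⟩⟩
  · intro γ hγ γ' hγ' h
    obtain ⟨x, rfl⟩ := (mem_unit_iff _).1 hγ
    obtain ⟨y, rfl⟩ := (mem_unit_iff _).1 hγ'
    have h2 : x = y := congrArg Prod.fst h
    subst h2; rfl
  · intro γ hγ γ' hγ' h
    obtain ⟨x, rfl⟩ := (mem_unit_iff _).1 hγ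
    obtain ⟨y, rfl⟩ := (mem_unit_iff _).1 hγ'
    have h2 : x = y := congrArg Prod.fst h
    subst h2; rfl
  · intro A _ hA
    rw [himg] at hA
    rw [hrMul A hA]
  · intro γ hγ
    obtain ⟨x, rfl⟩ := (mem_unit_iff _).1 hγ
    rw [linLen_unit]; norm_num

lemma s_image_K0 : (pathGroupoid LinPath).s '' K0
    = {γ | ∃ m : ℕ, γ = (pathFrom (m + 1), 0, pathFrom (m + 1))} := by
  ext γ
  constructor
  · rintro ⟨γ', ⟨m, rfl⟩, rfl⟩
    exact ⟨m, rfl⟩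
  · rintro ⟨m, rfl⟩
    exact ⟨(pathFrom m, -1, pathFrom (m + 1)), ⟨m, rfl⟩, rfl⟩

lemma admissible_K0 :
    (pathGroupoid LinPath).IsAdmissible linLen (Measure.map diag μP) K0 := by
  refine ⟨⟨?_, ?_⟩, meas_all _, meas_all _, fun A _ _ => meas_all _,
    fun B _ _ => meas_all _, ?_, ⟨1, ?_⟩⟩
  · rintro γ ⟨m, rfl⟩ γ' ⟨m', rfl⟩ h
    have : pathFrom (m + 1) = pathFrom (m' + 1) := congrArg Prod.fst h
    have h2 : m = m' := by
      have := pathFrom_injective this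
      omega
    subst h2; rfl
  · rintro γ ⟨m, rfl⟩ γ' ⟨m', rfl⟩ h
    have : pathFrom m = pathFrom m' := congrArg Prod.fst h
    have hm := pathFrom_injective this
    subst hm; rfl
  · intro A _ hA
    rw [s_image_K0 μP hμ] at hA
    rw [mu'_zero_iff μP hμ, mu'_zero_iff μP hμ]
    constructor
    · intro h x hx
      obtain ⟨m, hm⟩ := hA hx
      have hd : diag x = (pathFrom (m + 1), 0, pathFrom (m + 1)) := hm
      have hx1 : x = pathFrom (m + 1) := congrArg Prod.fst hd
      apply h (pathFrom m)
      refine ⟨(pathFrom m, -1, pathFrom (m + 1)), ⟨⟨m, rfl⟩, ?_⟩, rfl⟩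
      show (pathFrom (m + 1), (0:ℤ), pathFrom (m + 1)) ∈ A
      rw [← hd]; exact hx
    · intro h x hx
      obtain ⟨γ', ⟨⟨m, rfl⟩, hs⟩, hr⟩ := hx
      exact h (pathFrom (m + 1)) hs
  · rintro γ ⟨m, rfl⟩
    rw [linLen_K0]

lemma admissible_K1 :
    (pathGroupoid LinPath).IsAdmissible linLen (Measure.map diag μP) K1 := by
  refine ⟨⟨?_, ?_⟩, meas_all _, meas_all _, fun A _ _ => meas_all _,
    fun B _ _ => meas_all _, ?_, ⟨1, ?_⟩⟩
  · rintro γ rfl γ' rfl _; rfl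
  · rintro γ rfl γ' rfl _; rfl
  · intro A _ hA
    have himg : (pathGroupoid LinPath).s '' K1 = {(pathFrom 0, 0, pathFrom 0)} := by
      ext γ
      constructor
      · rintro ⟨γ', rfl, rfl⟩; rfl
      · rintro rfl; exact ⟨(pathFrom 1, 1, pathFrom 0), rfl, rfl⟩
    rw [himg] at hA
    rw [mu'_zero_iff μP hμ, mu'_zero_iff μP hμ]
    constructor
    · intro h x hx
      have hd : diag x = (pathFrom 0, 0, pathFrom 0) := hA hx
      have hx1 : x = pathFrom 0 := congrArg Prod.fst hd
      apply h (pathFrom 1)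
      refine ⟨(pathFrom 1, 1, pathFrom 0), ⟨rfl, ?_⟩, rfl⟩
      show (pathFrom 0, (0:ℤ), pathFrom 0) ∈ A
      rw [← hd]; exact hx
    · intro h x hx
      obtain ⟨γ', ⟨hγ', hs⟩, hr⟩ := hx
      cases hγ'
      exact h (pathFrom 0) hs
  · rintro γ rfl
    rw [linLen_K1]

lemma Kfull_decomposable :
    (pathGroupoid LinPath).IsDecomposable linLen (Measure.map diag μP) Kfull := by
  refine ⟨3, ![(pathGroupoid LinPath).unitSpace, K0, K1], fun i => ?_, ?_⟩
  · fin_cases i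
    · exact admissible_unit μP hμ
    · exact admissible_K0 μP hμ
    · exact admissible_K1 μP hμ
  · ext γ
    simp only [Set.mem_iUnion, Kfull, Set.mem_union]
    constructor
    · rintro ((h | h) | h)
      · exact ⟨0, h⟩
      · exact ⟨1, h⟩
      · exact ⟨2, h⟩
    · rintro ⟨i, h⟩
      fin_cases i
      · exact Or.inl (Or.inl h)
      · exact Or.inl (Or.inr h)
      · exact Or.inr h

end Meas

lemma Kfull_subset_B1 : Kfull ⊆ {γ | SE γ ∧ linLen γ ≤ 1} := by
  rintro γ ((h | ⟨m, rfl⟩) | h)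
  · obtain ⟨x, rfl⟩ := (mem_unit_iff _).1 h
    exact ⟨⟨0, mem_SEset_unit x⟩, by rw [linLen_unit]; norm_num⟩
  · exact ⟨⟨1, mem_SEset_K0 m⟩, by rw [linLen_K0]⟩
  · cases h
    exact ⟨⟨0, mem_SEset_K1⟩, by rw [linLen_K1]⟩

end Stmt18Aux

open Stmt18Aux in
open MeasureTheory in
/-- the graph groupoid of the linear graph on `ℕ`, with
`μ(Z(n)) = 2^{-(n+1)}`, is expanding in measure: there are `C > 0` (e.g. `C = 1/2`)
and a decomposable `K` contained in the unit ball `B₁` of the graph groupoid such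
that `μ(r(K·A)) ≥ (1+C)·μ(A)` for all measurable `A` with `0 < μ(A) ≤ 1/2`. -/
theorem stmt18 (μP : Measure LinPath) [IsProbabilityMeasure μP]
    (hμ : ∀ n : ℕ, μP {pathFrom n} = (2 : ENNReal)⁻¹ ^ (n + 1)) :
    ∀ (𝒢 : AlgGroupoid (LinPath × ℤ × LinPath))
      (μ' : Measure (LinPath × ℤ × LinPath)),
      𝒢 = pathGroupoid LinPath →
      μ' = Measure.map (fun x => (x, (0 : ℤ), x)) μP →
      ∃ C : ℝ, 0 < C ∧ ∃ K : Set (LinPath × ℤ × LinPath),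
        K ⊆ {γ | SE γ ∧ linLen γ ≤ 1} ∧ 𝒢.IsDecomposable linLen μ' K ∧
        ∀ A : Set (LinPath × ℤ × LinPath), MeasurableSet A → A ⊆ 𝒢.unitSpace →
          0 < (μ' A).toReal → (μ' A).toReal ≤ 1 / 2 →
          (1 + C) * (μ' A).toReal ≤ (μ' (𝒢.rMul K A)).toReal := by
  intro 𝒢 μ' h𝒢 hμ'
  subst h𝒢
  subst hμ'
  have hdiag : (fun x : LinPath => (x, (0:ℤ), x)) = diag := rfl
  rw [hdiag]
  refine ⟨1/2, by norm_num, Kfull, Kfull_subset_B1, Kfull_decomposable μP hμ, ?_⟩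
  intro A hAm hAu hpos hA2
  set S : Set LinPath := diag ⁻¹' A with hS
  have hA' : Measure.map diag μP A = μP S := mu'_apply μP A
  have hRne : Measure.map diag μP ((pathGroupoid LinPath).rMul Kfull A) ≠ ⊤ :=
    mu'_ne_top μP _
  by_cases h0 : pathFrom 0 ∈ S
  · -- Case: pathFrom 0 ∈ S, forcing S = {pathFrom 0}
    have hfin : μP S ≠ ⊤ := measure_ne_top μP S
    have hge : (2:ENNReal)⁻¹ ≤ μP S := by
      have h : μP {pathFrom 0} ≤ μP S :=
        measure_mono (Set.singleton_subset_iff.2 h0)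
      rwa [hμ 0, pow_one] at h
    have hhalf : ((2:ENNReal)⁻¹).toReal = 1/2 := by
      norm_num [ENNReal.toReal_inv]
    have hSval : μP S = 2⁻¹ := by
      refine le_antisymm ?_ hge
      have htR : (μP S).toReal ≤ ((2:ENNReal)⁻¹).toReal := by
        rw [hhalf, ← hA']; exact hA2
      exact (ENNReal.toReal_le_toReal hfin (by norm_num)).mp htR
    have hdiff : μP (S \ {pathFrom 0}) = 0 := by
      rw [measure_diff (Set.singleton_subset_iff.2 h0)
        (measP_all {pathFrom 0}).nullMeasurableSet
        (by rw [hμ 0, pow_one]; norm_num), hSval, hμ 0, pow_one, tsub_self]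
    have hu0 : diag (pathFrom 0) ∈ A := h0
    have hsub : ({pathFrom 0, pathFrom 1} : Set LinPath) ⊆
        diag ⁻¹' ((pathGroupoid LinPath).rMul Kfull A) := by
      rintro x (rfl | rfl)
      · exact ⟨diag (pathFrom 0), ⟨Or.inl (Or.inl ⟨rfl, rfl⟩), hu0⟩, rfl⟩
      · exact ⟨(pathFrom 1, 1, pathFrom 0), ⟨Or.inr rfl, hu0⟩, rfl⟩
    have hmeas2 : μP {pathFrom 0, pathFrom 1} = 2⁻¹ + 2⁻¹^2 := by
      rw [Set.insert_eq, measure_union ?_ (measP_all {pathFrom 1}), hμ 0, hμ 1,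
        pow_one]
      · simp only [Set.disjoint_singleton]
        intro h
        have := pathFrom_injective h
        omega
    have hlow : (2:ENNReal)⁻¹ + 2⁻¹^2 ≤
        Measure.map diag μP ((pathGroupoid LinPath).rMul Kfull A) := by
      rw [mu'_apply]
      calc (2:ENNReal)⁻¹ + 2⁻¹^2 = μP {pathFrom 0, pathFrom 1} := hmeas2.symm
        _ ≤ _ := measure_mono hsub
    have hR : ((2:ENNReal)⁻¹ + 2⁻¹^2).toReal ≤
        (Measure.map diag μP ((pathGroupoid LinPath).rMul Kfull A)).toReal :=
      ENNReal.toReal_mono hRne hlow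
    have hcalc : ((2:ENNReal)⁻¹ + 2⁻¹^2).toReal = 3/4 := by
      rw [ENNReal.toReal_add (by norm_num) (by norm_num)]
      norm_num [ENNReal.toReal_inv, ENNReal.toReal_pow]
    rw [hA', hSval, hhalf]
    rw [hcalc] at hR
    linarith
  · -- Case: pathFrom 0 ∉ S
    set I : Set ℕ := {n | pathFrom n ∈ S} with hI
    have hI1 : ∀ n ∈ I, 1 ≤ n := by
      intro n hn
      by_contra h
      push_neg at h
      have hn0 : n = 0 := by omega
      exact h0 (hn0 ▸ hn)
    have hSI : S = pathFrom '' I := by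
      ext x
      constructor
      · intro hx
        exact ⟨x.val 0, by rw [Set.mem_setOf_eq, ← path_eq]; exact hx,
          (path_eq x).symm⟩
      · rintro ⟨n, hn, rfl⟩; exact hn
    have hshift := measure_shift μP hμ hI1
    have hsub : pathFrom '' (Nat.pred '' I) ⊆
        diag ⁻¹' ((pathGroupoid LinPath).rMul Kfull A) := by
      rintro x ⟨k, ⟨n, hn, rfl⟩, rfl⟩
      have h1 : 1 ≤ n := hI1 n hn
      have h2 : Nat.pred n + 1 = n := Nat.succ_pred_eq_of_pos h1
      refine Set.mem_preimage.mpr ⟨(pathFrom (Nat.pred n), -1,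
        pathFrom (Nat.pred n + 1)), ⟨Or.inl (Or.inr ⟨Nat.pred n, rfl⟩), ?_⟩, rfl⟩
      show diag (pathFrom (Nat.pred n + 1)) ∈ A
      rw [h2]
      exact hn
    have hmain : 2 * μP S ≤
        Measure.map diag μP ((pathGroupoid LinPath).rMul Kfull A) := by
      rw [mu'_apply]
      calc 2 * μP S = μP (pathFrom '' (Nat.pred '' I)) := by rw [hshift, hSI]
        _ ≤ _ := measure_mono hsub
    have h2a : ((2:ENNReal) * μP S).toReal ≤
        (Measure.map diag μP ((pathGroupoid LinPath).rMul Kfull A)).toReal :=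
      ENNReal.toReal_mono hRne hmain
    rw [ENNReal.toReal_mul, ENNReal.toReal_ofNat] at h2a
    rw [hA']
    have hnn : 0 ≤ (μP S).toReal := ENNReal.toReal_nonneg
    linarith
end

section
/- Let k ≥ 2 and G be the graph with vertex set ℕ and edges (n, n+i) for 1 ≤ i ≤ k, with graph groupoid 𝒢, length function ℓ(x,k,y) = 2N(x,k,y)+k, and Borel probability measure μ on P(G) determined by μ(Z(α)) = 2^{−(n+1)} k^{−m} for a finite path α of length m starting at vertex n. Then 𝒢 is not asymptotically expanding in measure: there exists a sequence of measurable sets A_p ⊆ P(G) with 1/(k(k+1)) < μ(A_p) ≤ 1/k such that μ(r(B₁·A_p) \ A_p) → 0 as p → ∞. -/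
open MeasureTheory Set

/-- An infinite path in the graph on `ℕ` with edges `(n, n+i+1)` for `i ∈ Fin k`:
it is determined by its starting vertex and its sequence of jumps. -/
abbrev KPath (k : ℕ) := ℕ × (ℕ → Fin k)

/-- The `j`-th vertex along a path. -/
def vert {k : ℕ} (p : KPath k) (j : ℕ) : ℕ :=
  p.1 + ∑ t ∈ Finset.range j, ((p.2 t : ℕ) + 1)

/-- The `j`-th edge of a path, an edge being a pair (source vertex, jump). -/
def edgeOf {k : ℕ} (p : KPath k) (j : ℕ) : ℕ × Fin k := (vert p j, p.2 j)

/-- Witnesses for shift equivalence with the given lag. -/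
def SEsetK {k : ℕ} (p : KPath k × ℤ × KPath k) : Set ℕ :=
  {N | ∀ i : ℕ, N ≤ i → 0 ≤ (i : ℤ) + p.2.1 ∧
    edgeOf p.1 i = edgeOf p.2.2 ((i : ℤ) + p.2.1).toNat}

/-- Shift equivalence. -/
def SEK {k : ℕ} (p : KPath k × ℤ × KPath k) : Prop := (SEsetK p).Nonempty

/-- The length function `ℓ(x,k,y) = 2·N(x,k,y) + k` on the graph groupoid. -/
noncomputable def kLen {k : ℕ} (p : KPath k × ℤ × KPath k) : ℝ :=
  2 * ((sInf (SEsetK p) : ℕ) : ℝ) + (p.2.1 : ℝ)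

/-- The cylinder set of paths starting at vertex `n` whose first jumps are given
by the word `w`; it corresponds to the finite path of length `w.length` from `n`. -/
def cylK {k : ℕ} (n : ℕ) (w : List (Fin k)) : Set (KPath k) :=
  {p | p.1 = n ∧ ∀ (j : ℕ) (h : j < w.length), p.2 j = w.get ⟨j, h⟩}

/-
Let `A_T` (`hitSet k T`) be the set of paths that pass through vertex `T` and step from there
to `T + 1`. An arrow of length at most `1` is a unit or a one-step shift `(σy, 1, y)` or
`(x, -1, σx)`, and a shift only loses the first edge, so `r(B₁ · A_T) \ A_T` consists of paths
starting at `T + 1`; its measure is at most `2^{-(T+2)}`.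
Conditioned on its start `n ≤ T`, a path visits `T` with probability `h(T - n) ∈ [1/k, 1]`
(`hitWeight`, bounded through the renewal recursion `h(d+1) = (1/k) ∑_{i<min(d+1,k)} h(d-i)`)
and then steps by `1` with probability `1/k`. Summing over `n` gives
`(1 - 2^{-(T+1)})/k² ≤ μ(A_T) ≤ 1/k`, which exceeds `1/(k(k+1))` once `T ≥ k`; take `T = p + k`.
-/

open scoped ENNReal

section Words

variable {k : ℕ}

def jumpSum (w : List (Fin k)) : ℕ := (w.map fun a : Fin k => (a : ℕ) + 1).sum

@[simp] lemma jumpSum_nil : jumpSum ([] : List (Fin k)) = 0 := rfl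

@[simp] lemma jumpSum_cons (a : Fin k) (w : List (Fin k)) :
    jumpSum (a :: w) = (a : ℕ) + 1 + jumpSum w := by
  simp [jumpSum]

lemma jumpSum_eq_sum_getElem (w : List (Fin k)) :
    jumpSum w = ∑ i : Fin w.length, ((w[i.1] : ℕ) + 1) :=
  (Fin.sum_univ_fun_getElem w _).symm

lemma eq_nil_of_jumpSum_eq_zero {w : List (Fin k)} (h : jumpSum w = 0) : w = [] := by
  cases w <;> simp_all

abbrev WordsOfSum (k d : ℕ) := {w : List (Fin k) // jumpSum w = d}

/-- The probability that the walk on `ℕ` started at `0`, with independent jumps uniform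
in `{1, …, k}`, visits `d`. -/
noncomputable def hitWeight (k d : ℕ) : ℝ≥0∞ :=
  ∑' w : WordsOfSum k d, (k : ℝ≥0∞)⁻¹ ^ w.1.length

lemma hitWeight_zero : hitWeight k 0 = 1 := by
  rw [hitWeight, tsum_eq_single (⟨[], rfl⟩ : WordsOfSum k 0)]
  · simp
  · exact fun w hw => absurd (Subtype.ext (eq_nil_of_jumpSum_eq_zero w.2)) hw

def consWordsEquiv (k d : ℕ) :
    (Σ i : Fin (min (d + 1) k), WordsOfSum k (d - i)) ≃ WordsOfSum k (d + 1) where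
  toFun q := ⟨⟨q.1, (lt_min_iff.mp q.1.2).2⟩ :: q.2.1, by
    have := (lt_min_iff.mp q.1.2).1
    have := q.2.2
    simp only [jumpSum_cons]
    omega⟩
  invFun
    | ⟨[], h⟩ => absurd h (by simp)
    | ⟨a :: t, h⟩ =>
      ⟨⟨a, lt_min_iff.mpr ⟨by simp only [jumpSum_cons] at h; omega, a.2⟩⟩,
        ⟨t, show jumpSum t = d - a by simp only [jumpSum_cons] at h; omega⟩⟩
  left_inv := by rintro ⟨⟨i, hi⟩, ⟨t, ht⟩⟩; rfl
  right_inv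
    | ⟨[], h⟩ => absurd h (by simp)
    | ⟨_ :: _, _⟩ => rfl

lemma hitWeight_succ (d : ℕ) :
    hitWeight k (d + 1) =
      ∑ i ∈ Finset.range (min (d + 1) k), (k : ℝ≥0∞)⁻¹ * hitWeight k (d - i) := by
  rw [hitWeight, ← (consWordsEquiv k d).tsum_eq, ENNReal.tsum_sigma', tsum_fintype,
    ← Fin.sum_univ_eq_sum_range]
  refine Finset.sum_congr rfl fun i _ => ?_
  rw [hitWeight, ← ENNReal.tsum_mul_left]
  exact tsum_congr fun w => by simp [consWordsEquiv, pow_succ, mul_comm]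

variable [NeZero k]

lemma natCast_mul_inv_self : (k : ℝ≥0∞) * (k : ℝ≥0∞)⁻¹ = 1 :=
  ENNReal.mul_inv_cancel (by simp [NeZero.ne k]) (by simp)

lemma hitWeight_le_one (d : ℕ) : hitWeight k d ≤ 1 := by
  induction d using Nat.strong_induction_on with
  | _ d ih =>
    rcases d with _ | d
    · rw [hitWeight_zero]
    rw [hitWeight_succ]
    calc ∑ i ∈ Finset.range (min (d + 1) k), (k : ℝ≥0∞)⁻¹ * hitWeight k (d - i)
        ≤ ∑ _i ∈ Finset.range (min (d + 1) k), (k : ℝ≥0∞)⁻¹ :=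
          Finset.sum_le_sum fun i _ => mul_le_of_le_one_right' (ih _ (by omega))
      _ ≤ ∑ _i ∈ Finset.range k, (k : ℝ≥0∞)⁻¹ :=
          Finset.sum_le_sum_of_subset (Finset.range_subset_range.mpr (min_le_right _ _))
      _ = 1 := by simp [natCast_mul_inv_self]

lemma inv_le_hitWeight (d : ℕ) : (k : ℝ≥0∞)⁻¹ ≤ hitWeight k d := by
  induction d using Nat.strong_induction_on with
  | _ d ih =>
    rcases d with _ | d
    · simpa [hitWeight_zero] using NeZero.one_le
    rw [hitWeight_succ]
    rcases lt_or_ge d k with hdk | hkd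
    · -- the one-letter word `[d]` reaches `d + 1`
      calc (k : ℝ≥0∞)⁻¹ = (k : ℝ≥0∞)⁻¹ * hitWeight k (d - d) := by simp [hitWeight_zero]
        _ ≤ _ := Finset.single_le_sum (f := fun i => (k : ℝ≥0∞)⁻¹ * hitWeight k (d - i))
            (fun _ _ => zero_le) (Finset.mem_range.mpr (lt_min (by omega) hdk))
    · calc (k : ℝ≥0∞)⁻¹ = ∑ _i ∈ Finset.range k, (k : ℝ≥0∞)⁻¹ * (k : ℝ≥0∞)⁻¹ := by
            simp [← mul_assoc, natCast_mul_inv_self]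
        _ ≤ _ := by
            rw [min_eq_right (by omega)]
            exact Finset.sum_le_sum fun i _ => mul_le_mul_right (ih _ (by omega)) _

end Words

section Cylinders

variable {k : ℕ}

lemma vert_zero (x : KPath k) : vert x 0 = x.1 := by simp [vert]

lemma vert_succ (x : KPath k) (j : ℕ) : vert x (j + 1) = vert x j + ((x.2 j : ℕ) + 1) := by
  rw [vert, vert, Finset.sum_range_succ, add_assoc]

lemma vert_strictMono (x : KPath k) : StrictMono (vert x) :=
  strictMono_nat_of_lt_succ fun j => by rw [vert_succ]; omega

lemma vert_length_of_mem_cylK {x : KPath k} {n : ℕ} {w : List (Fin k)} (hx : x ∈ cylK n w) :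
    vert x w.length = n + jumpSum w := by
  rw [vert, hx.1, jumpSum_eq_sum_getElem, ← Fin.sum_univ_eq_sum_range]
  exact congrArg _ (Finset.sum_congr rfl fun i _ => by simp [hx.2 i i.2])

lemma eq_of_mem_cylK_of_jumpSum_eq {x : KPath k} {n n' : ℕ} {w w' : List (Fin k)}
    (hx : x ∈ cylK n w) (hx' : x ∈ cylK n' w') (hw : jumpSum w = jumpSum w') : w = w' := by
  have hlen : w.length = w'.length := (vert_strictMono x).injective <| by
    rw [vert_length_of_mem_cylK hx, vert_length_of_mem_cylK hx', hw, ← hx.1, ← hx'.1]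
  exact List.ext_get hlen fun i h h' => (hx.2 i h).symm.trans (hx'.2 i h')

lemma mem_cylK_append_singleton {x : KPath k} {n : ℕ} {w : List (Fin k)} {a : Fin k} :
    x ∈ cylK n (w ++ [a]) ↔ x ∈ cylK n w ∧ x.2 w.length = a := by
  simp only [cylK, mem_ofPred_eq, List.length_append, List.length_singleton, List.get_eq_getElem]
  constructor
  · rintro ⟨rfl, h⟩
    refine ⟨⟨rfl, fun j hj => ?_⟩, by simpa using h w.length (by omega)⟩
    rw [h j (by omega), List.getElem_append_left hj]
  · rintro ⟨⟨rfl, h⟩, ha⟩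
    refine ⟨rfl, fun j hj => ?_⟩
    rcases lt_or_ge j w.length with hj' | hj'
    · rw [h j hj', List.getElem_append_left hj']
    · obtain rfl : j = w.length := by omega
      simpa using ha

lemma mem_cylK_ofFn (x : KPath k) (j : ℕ) : x ∈ cylK x.1 (List.ofFn fun t : Fin j => x.2 t) :=
  ⟨rfl, fun t ht => by simp⟩

lemma measurableSet_cylK (n : ℕ) (w : List (Fin k)) : MeasurableSet (cylK n w) := by
  have h : cylK n w = {x : KPath k | x.1 = n} ∩
      ⋂ j : Fin w.length, {x : KPath k | x.2 j = w.get j} := by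
    ext x
    simp only [cylK, mem_ofPred_eq, mem_inter_iff, mem_iInter]
    exact and_congr_right fun _ => ⟨fun h j => h j j.2, fun h j hj => h ⟨j, hj⟩⟩
  rw [h]
  exact (measurableSet_singleton n).preimage measurable_fst |>.inter <|
    .iInter fun j => (measurableSet_singleton _).preimage (by fun_prop)

def HasCylinderWeights (μ : Measure (KPath k)) : Prop :=
  ∀ (n : ℕ) (w : List (Fin k)), μ (cylK n w) = (2 : ℝ≥0∞)⁻¹ ^ (n + 1) * (k : ℝ≥0∞)⁻¹ ^ w.length

lemma measure_setOf_fst_eq {μ : Measure (KPath k)} (hμ : HasCylinderWeights μ) (n : ℕ) :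
    μ {x | x.1 = n} = 2⁻¹ ^ (n + 1) := by
  simpa [cylK] using hμ n []

end Cylinders

lemma sum_range_inv_two_pow_succ_add (m : ℕ) :
    ∑ n ∈ Finset.range m, (2 : ℝ≥0∞)⁻¹ ^ (n + 1) + 2⁻¹ ^ m = 1 := by
  induction m with
  | zero => simp
  | succ m ih => rw [Finset.sum_range_succ, add_assoc, ← two_mul, pow_succ', ← mul_assoc,
      ENNReal.mul_inv_cancel two_ne_zero ENNReal.ofNat_ne_top, one_mul, ih]

section HitSet

variable {k : ℕ} [NeZero k]

/-- Paths using the edge from `T` to `T + 1` (jump index `0`). -/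
def hitSet (k : ℕ) [NeZero k] (T : ℕ) : Set (KPath k) := {x | ∃ j, edgeOf x j = (T, 0)}

lemma hitSet_eq_iUnion_cylK (T : ℕ) :
    hitSet k T = ⋃ n ∈ Finset.range (T + 1), ⋃ w : WordsOfSum k (T - n), cylK n (w.1 ++ [0]) := by
  ext x
  simp only [hitSet, edgeOf, mem_ofPred_eq, Prod.mk.injEq, mem_iUnion, Finset.mem_range,
    mem_cylK_append_singleton, exists_prop, Subtype.exists]
  constructor
  · rintro ⟨j, hj, hj0⟩
    have hvert := vert_length_of_mem_cylK (mem_cylK_ofFn x j)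
    simp only [List.length_ofFn] at hvert
    exact ⟨x.1, by omega, _, by omega, mem_cylK_ofFn x j, by simpa using hj0⟩
  · rintro ⟨n, hn, w, hw, hx, hx0⟩
    exact ⟨w.length, by rw [vert_length_of_mem_cylK hx, hw]; omega, hx0⟩

lemma measurableSet_hitSet (T : ℕ) : MeasurableSet (hitSet k T) := by
  rw [hitSet_eq_iUnion_cylK]
  exact .biUnion (Finset.countable_toSet _) fun n _ => .iUnion fun w => measurableSet_cylK _ _

lemma measure_hitSet {μ : Measure (KPath k)} (hμ : HasCylinderWeights μ) (T : ℕ) :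
    μ (hitSet k T) =
      ∑ n ∈ Finset.range (T + 1),
        (2 : ℝ≥0∞)⁻¹ ^ (n + 1) * ((k : ℝ≥0∞)⁻¹ * hitWeight k (T - n)) := by
  have hdisj_start : PairwiseDisjoint (↑(Finset.range (T + 1)) : Set ℕ)
      fun n => ⋃ w : WordsOfSum k (T - n), cylK n (w.1 ++ [0]) := by
    intro n _ n' _ hne
    simp only [Function.onFun, disjoint_iUnion_left, disjoint_iUnion_right]
    exact fun _ _ => disjoint_left.mpr fun x hx hx' => hne (hx.1.symm.trans hx'.1)
  have hdisj_word (n : ℕ) : Pairwise fun w w' : WordsOfSum k (T - n) =>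
      Disjoint (cylK n (w.1 ++ [0])) (cylK n (w'.1 ++ [0])) := fun w w' hne =>
    disjoint_left.mpr fun x hx hx' => hne <| Subtype.ext <|
      eq_of_mem_cylK_of_jumpSum_eq (mem_cylK_append_singleton.mp hx).1
        (mem_cylK_append_singleton.mp hx').1 (w.2.trans w'.2.symm)
  rw [hitSet_eq_iUnion_cylK, measure_biUnion_finset hdisj_start
    fun n _ => .iUnion fun w => measurableSet_cylK _ _]
  refine Finset.sum_congr rfl fun n _ => ?_
  rw [measure_iUnion (hdisj_word n) fun w => measurableSet_cylK _ _, hitWeight,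
    ← ENNReal.tsum_mul_left, ← ENNReal.tsum_mul_left]
  exact tsum_congr fun w => by rw [hμ, List.length_append, List.length_singleton, pow_succ']; ring

lemma measure_hitSet_le {μ : Measure (KPath k)} (hμ : HasCylinderWeights μ) (T : ℕ) :
    μ (hitSet k T) ≤ (k : ℝ≥0∞)⁻¹ :=
  calc μ (hitSet k T)
      ≤ ∑ n ∈ Finset.range (T + 1), (2 : ℝ≥0∞)⁻¹ ^ (n + 1) * (k : ℝ≥0∞)⁻¹ := by
        rw [measure_hitSet hμ]
        gcongr with n
        exact mul_le_of_le_one_right' (hitWeight_le_one _)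
    _ ≤ 1 * (k : ℝ≥0∞)⁻¹ := by
        rw [← Finset.sum_mul]
        gcongr
        exact le_self_add.trans_eq (sum_range_inv_two_pow_succ_add _)
    _ = (k : ℝ≥0∞)⁻¹ := one_mul _

lemma le_measure_hitSet {μ : Measure (KPath k)} (hμ : HasCylinderWeights μ) (T : ℕ) :
    (1 - 2⁻¹ ^ (T + 1)) * ((k : ℝ≥0∞)⁻¹ * (k : ℝ≥0∞)⁻¹) ≤ μ (hitSet k T) :=
  calc (1 - 2⁻¹ ^ (T + 1)) * ((k : ℝ≥0∞)⁻¹ * (k : ℝ≥0∞)⁻¹)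
      = ∑ n ∈ Finset.range (T + 1), (2 : ℝ≥0∞)⁻¹ ^ (n + 1) * ((k : ℝ≥0∞)⁻¹ * (k : ℝ≥0∞)⁻¹) := by
        rw [← Finset.sum_mul, ← sum_range_inv_two_pow_succ_add (T + 1),
          ENNReal.add_sub_cancel_right (by simp)]
    _ ≤ μ (hitSet k T) := by
        rw [measure_hitSet hμ]
        exact Finset.sum_le_sum fun n _ => by gcongr; exact inv_le_hitWeight _

lemma one_div_mul_add_one_lt_toReal_measure_hitSet {μ : Measure (KPath k)}
    (hμ : HasCylinderWeights μ) {T : ℕ} (hT : k ≤ T) :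
    1 / ((k : ℝ) * ((k : ℝ) + 1)) < (μ (hitSet k T)).toReal := by
  have hk : (0 : ℝ) < k := by simp [NeZero.pos k]
  have h2 : (k : ℝ) + 1 < 2 ^ (T + 1) := by
    exact_mod_cast (Nat.lt_two_pow_self (n := k + 1)).trans_le
      (Nat.pow_le_pow_right two_pos (by omega))
  have hlow := ENNReal.toReal_mono ((measure_hitSet_le hμ T).trans_lt (by simp [NeZero.pos k])).ne
    (le_measure_hitSet hμ T)
  rw [ENNReal.toReal_mul, ENNReal.toReal_sub_of_le (pow_le_one₀ (by simp) (by simp)) (by simp)]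
    at hlow
  simp only [ENNReal.toReal_one, ENNReal.toReal_pow, ENNReal.toReal_inv, ENNReal.toReal_ofNat,
    ENNReal.toReal_mul, ENNReal.toReal_natCast] at hlow
  calc 1 / ((k : ℝ) * ((k : ℝ) + 1)) = (1 - ((k : ℝ) + 1)⁻¹) * ((k : ℝ)⁻¹ * (k : ℝ)⁻¹) := by
        field_simp
        ring
    _ < (1 - 2⁻¹ ^ (T + 1)) * ((k : ℝ)⁻¹ * (k : ℝ)⁻¹) := by
        gcongr
        rw [inv_pow]
        exact inv_strictAnti₀ (by positivity) h2
    _ ≤ (μ (hitSet k T)).toReal := hlow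

lemma toReal_measure_hitSet_le {μ : Measure (KPath k)} (hμ : HasCylinderWeights μ) (T : ℕ) :
    (μ (hitSet k T)).toReal ≤ 1 / k := by
  simpa using ENNReal.toReal_mono (by simp [NeZero.ne k]) (measure_hitSet_le hμ T)

end HitSet

section UnitBall

variable {k : ℕ}

lemma edgeOf_cases_of_kLen_le_one {x y : KPath k} {m : ℤ} (hSE : SEK (x, m, y))
    (hlen : kLen (x, m, y) ≤ 1) :
    (∀ i, edgeOf x i = edgeOf y i) ∨ (∀ i, edgeOf x i = edgeOf y (i + 1)) ∨
      ∀ i, edgeOf x (i + 1) = edgeOf y i := by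
  have hN := Nat.sInf_mem hSE
  set N := sInf (SEsetK (x, m, y))
  have hlenZ : 2 * (N : ℤ) + m ≤ 1 := by unfold kLen at hlen; exact_mod_cast hlen
  have hedge (i : ℕ) (hi : N ≤ i) : edgeOf x i = edgeOf y ((i : ℤ) + m).toNat := (hN i hi).2
  have hNm : 0 ≤ (N : ℤ) + m := (hN N le_rfl).1
  rcases (by omega : (N = 0 ∧ m = 0) ∨ (N = 0 ∧ m = 1) ∨ (N = 1 ∧ m = -1)) with
    ⟨hN0, rfl⟩ | ⟨hN0, rfl⟩ | ⟨hN1, rfl⟩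
  · exact .inl fun i => by simpa using hedge i (by omega)
  · exact .inr <| .inl fun i => by
      simpa [show ((i : ℤ) + 1).toNat = i + 1 by omega] using hedge i (by omega)
  · exact .inr <| .inr fun i => by
      simpa [show (((i + 1 : ℕ) : ℤ) + -1).toNat = i by omega] using hedge (i + 1) (by omega)

variable [NeZero k]

/-- A one-step shift loses at most the first edge of `y`; if that edge is `(T, T + 1)`,
then `x` starts at `T + 1`. -/
lemma start_eq_of_kLen_le_one {x y : KPath k} {m : ℤ} {T : ℕ} (hSE : SEK (x, m, y))
    (hlen : kLen (x, m, y) ≤ 1) (hy : y ∈ hitSet k T) (hx : x ∉ hitSet k T) : x.1 = T + 1 := by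
  obtain ⟨j, hj⟩ := hy
  rcases edgeOf_cases_of_kLen_le_one hSE hlen with h | h | h
  · exact absurd ⟨j, (h j).trans hj⟩ hx
  · rcases j with _ | j
    · have hx0 := congrArg Prod.fst (h 0)
      simp only [edgeOf, vert_succ, vert_zero, Prod.mk.injEq] at hx0 hj
      rw [hx0, hj.1, hj.2, Fin.val_zero]
    · exact absurd ⟨j, (h j).trans hj⟩ hx
  · exact absurd ⟨j + 1, (h j).trans hj⟩ hx

lemma rMul_unitBall_diff_subset (T : ℕ) :
    (pathGroupoid (KPath k)).rMul {γ | SEK γ ∧ kLen γ ≤ 1}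
        ((fun x => (x, (0 : ℤ), x)) '' hitSet k T) \ (fun x => (x, (0 : ℤ), x)) '' hitSet k T ⊆
      (fun x => (x, (0 : ℤ), x)) '' {x | x.1 = T + 1} := by
  rintro _ ⟨⟨⟨x, m, y⟩, ⟨⟨hSE, hlen⟩, y', hy', hyy'⟩, rfl⟩, hx⟩
  obtain rfl : y' = y := congrArg Prod.fst hyy'
  exact ⟨x, start_eq_of_kLen_le_one hSE hlen hy' fun h => hx ⟨x, h, rfl⟩, rfl⟩

end UnitBall

section Diagonal

variable {P : Type*} [MeasurableSpace P] [MeasurableEq P]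

lemma measurableEmbedding_diag : MeasurableEmbedding fun x : P => (x, (0 : ℤ), x) := by
  refine .of_measurable_inverse (g := Prod.fst) (by fun_prop) ?_ (by fun_prop) fun _ => rfl
  have : range (fun x : P => (x, (0 : ℤ), x)) = {q | q.2.1 = 0} ∩ {q | q.2.2 = q.1} := by
    ext ⟨x, m, y⟩
    simp [eq_comm]
  rw [this]
  exact ((measurableSet_singleton 0).preimage (by fun_prop)).inter
    (measurableSet_eq_fun (by fun_prop) (by fun_prop))

lemma map_diag_apply_image (μ : Measure P) (S : Set P) :
    μ.map (fun x => (x, (0 : ℤ), x)) ((fun x => (x, (0 : ℤ), x)) '' S) = μ S := by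
  rw [measurableEmbedding_diag.map_apply, preimage_image_eq _ measurableEmbedding_diag.injective]

end Diagonal

lemma map_diag_rMul_unitBall_diff_hitSet_le {k : ℕ} [NeZero k] {μ : Measure (KPath k)}
    (hμ : HasCylinderWeights μ) (T : ℕ) :
    μ.map (fun x => (x, (0 : ℤ), x)) ((pathGroupoid (KPath k)).rMul {γ | SEK γ ∧ kLen γ ≤ 1}
        ((fun x => (x, (0 : ℤ), x)) '' hitSet k T) \ (fun x => (x, (0 : ℤ), x)) '' hitSet k T) ≤
      2⁻¹ ^ (T + 2) :=
  (measure_mono (rMul_unitBall_diff_subset T)).trans_eq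
    ((map_diag_apply_image μ _).trans (measure_setOf_fst_eq hμ _))

open MeasureTheory in
theorem stmt19_general (k : ℕ) (hk : 2 ≤ k) (μP : Measure (KPath k))
    (hμ : ∀ (n : ℕ) (w : List (Fin k)),
      μP (cylK n w) = (2 : ENNReal)⁻¹ ^ (n + 1) * ((k : ENNReal))⁻¹ ^ w.length) :
    ∀ (𝒢 : AlgGroupoid (KPath k × ℤ × KPath k))
      (μ' : Measure (KPath k × ℤ × KPath k)),
      𝒢 = pathGroupoid (KPath k) →
      μ' = Measure.map (fun x => (x, (0 : ℤ), x)) μP →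
      ∃ A : ℕ → Set (KPath k × ℤ × KPath k),
        (∀ p : ℕ, MeasurableSet (A p) ∧ A p ⊆ 𝒢.unitSpace ∧
          1 / ((k : ℝ) * ((k : ℝ) + 1)) < (μ' (A p)).toReal ∧
          (μ' (A p)).toReal ≤ 1 / (k : ℝ)) ∧
        Filter.Tendsto
          (fun p => (μ' (𝒢.rMul {γ | SEK γ ∧ kLen γ ≤ 1} (A p) \ A p)).toReal)
          Filter.atTop (nhds 0) := by
  rintro _ _ rfl rfl
  have : NeZero k := ⟨by omega⟩
  refine ⟨fun p => (fun x => (x, (0 : ℤ), x)) '' hitSet k (p + k), fun p => ⟨?_, ?_, ?_, ?_⟩, ?_⟩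
  · exact measurableEmbedding_diag.measurableSet_image' (measurableSet_hitSet _)
  · exact image_subset_iff.mpr fun x _ => ⟨rfl, rfl⟩
  · rw [map_diag_apply_image]
    exact one_div_mul_add_one_lt_toReal_measure_hitSet hμ (by omega)
  · rw [map_diag_apply_image]
    exact toReal_measure_hitSet_le hμ _
  refine squeeze_zero (fun _ => ENNReal.toReal_nonneg) (fun p => ?_) <|
    (tendsto_pow_atTop_nhds_zero_of_lt_one (r := (2⁻¹ : ℝ)) (by norm_num) (by norm_num)).comp
      (Filter.tendsto_add_atTop_nat (k + 2))
  simpa [add_assoc] using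
    ENNReal.toReal_mono (by simp) (map_diag_rMul_unitBall_diff_hitSet_le hμ (p + k))

open MeasureTheory in
/-- for `k ≥ 2`, the graph groupoid of the graph on `ℕ` with edges
`(n, n+i)`, `1 ≤ i ≤ k`, and the measure with `μ(Z(α)) = 2^{-(n+1)} k^{-m}` for a
finite path `α` of length `m` from `n`, is not asymptotically expanding: there are
measurable sets `A_p` with `1/(k(k+1)) < μ(A_p) ≤ 1/k` and
`μ(r(B₁·A_p) \ A_p) → 0`. -/
theorem stmt19 (k : ℕ) (hk : 2 ≤ k) (μP : Measure (KPath k))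
    [IsProbabilityMeasure μP]
    (hμ : ∀ (n : ℕ) (w : List (Fin k)),
      μP (cylK n w) = (2 : ENNReal)⁻¹ ^ (n + 1) * ((k : ENNReal))⁻¹ ^ w.length) :
    ∀ (𝒢 : AlgGroupoid (KPath k × ℤ × KPath k))
      (μ' : Measure (KPath k × ℤ × KPath k)),
      𝒢 = pathGroupoid (KPath k) →
      μ' = Measure.map (fun x => (x, (0 : ℤ), x)) μP →
      ∃ A : ℕ → Set (KPath k × ℤ × KPath k),
        (∀ p : ℕ, MeasurableSet (A p) ∧ A p ⊆ 𝒢.unitSpace ∧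
          1 / ((k : ℝ) * ((k : ℝ) + 1)) < (μ' (A p)).toReal ∧
          (μ' (A p)).toReal ≤ 1 / (k : ℝ)) ∧
        Filter.Tendsto
          (fun p => (μ' (𝒢.rMul {γ | SEK γ ∧ kLen γ ≤ 1} (A p) \ A p)).toReal)
          Filter.atTop (nhds 0) :=
  stmt19_general k hk μP hμ
end
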